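/- arXiv:1609.09182 — 2 statements merged into one kernel-verified Lean document; each statement's English description precedes it below -/
import Mathlib

section
/- For all k_1, k_2 ≥ 2, the series g^{(1,0)}_{k_1,k_2} lies in the ℚ-linear span of the series g^sh of weight at most k_1 + k_2 + 1 (in depths 0 through 3). -/
open Finset PowerSeries

/-- The `q`-series `g^{(d)}_k(q) = Σ_{u,v ≥ 1} (u^d/d!)(v^{k-1}/(k-1)!) q^{uv}` as a
formal power series: the coefficient of `q^n` is the (finite) sum over divisors. -/
noncomputable def gb (d k : ℕ) : PowerSeries ℚ :=
  PowerSeries.mk fun n =>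
    ∑ u ∈ n.divisors,
      ((u : ℚ) ^ d / (Nat.factorial d : ℚ)) *
        (((n / u : ℕ) : ℚ) ^ (k - 1) / (Nat.factorial (k - 1) : ℚ))

/-- `g_k = g^{(0)}_k`. -/
noncomputable def g (k : ℕ) : PowerSeries ℚ := gb 0 k

/-- The depth-two series `g^{(d₁,d₂)}_{k₁,k₂}`. -/
noncomputable def gb2 (d1 d2 k1 k2 : ℕ) : PowerSeries ℚ :=
  PowerSeries.mk fun n =>
    ∑ u1 ∈ Finset.range (n+1), ∑ u2 ∈ Finset.range (n+1),
    ∑ v1 ∈ Finset.range (n+1), ∑ v2 ∈ Finset.range (n+1),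
      if 0 < u1 ∧ u1 < u2 ∧ 0 < v1 ∧ 0 < v2 ∧ u1 * v1 + u2 * v2 = n then
        ((u1 : ℚ) ^ d1 / (Nat.factorial d1 : ℚ)) *
        ((u2 : ℚ) ^ d2 / (Nat.factorial d2 : ℚ)) *
        ((v1 : ℚ) ^ (k1 - 1) / (Nat.factorial (k1 - 1) : ℚ)) *
        ((v2 : ℚ) ^ (k2 - 1) / (Nat.factorial (k2 - 1) : ℚ))
      else 0

/-- `g_{k₁,k₂} = g^{(0,0)}_{k₁,k₂}`. -/
noncomputable def g2 (k1 k2 : ℕ) : PowerSeries ℚ := gb2 0 0 k1 k2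

/-- The depth-three series `g^{(d₁,d₂,d₃)}_{k₁,k₂,k₃}`. -/
noncomputable def gb3 (d1 d2 d3 k1 k2 k3 : ℕ) : PowerSeries ℚ :=
  PowerSeries.mk fun n =>
    ∑ u1 ∈ Finset.range (n+1), ∑ u2 ∈ Finset.range (n+1), ∑ u3 ∈ Finset.range (n+1),
    ∑ v1 ∈ Finset.range (n+1), ∑ v2 ∈ Finset.range (n+1), ∑ v3 ∈ Finset.range (n+1),
      if 0 < u1 ∧ u1 < u2 ∧ u2 < u3 ∧ 0 < v1 ∧ 0 < v2 ∧ 0 < v3 ∧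
          u1 * v1 + u2 * v2 + u3 * v3 = n then
        ((u1 : ℚ) ^ d1 / (Nat.factorial d1 : ℚ)) *
        ((u2 : ℚ) ^ d2 / (Nat.factorial d2 : ℚ)) *
        ((u3 : ℚ) ^ d3 / (Nat.factorial d3 : ℚ)) *
        ((v1 : ℚ) ^ (k1 - 1) / (Nat.factorial (k1 - 1) : ℚ)) *
        ((v2 : ℚ) ^ (k2 - 1) / (Nat.factorial (k2 - 1) : ℚ)) *
        ((v3 : ℚ) ^ (k3 - 1) / (Nat.factorial (k3 - 1) : ℚ))
      else 0

/-- `g_{k₁,k₂,k₃} = g^{(0,0,0)}_{k₁,k₂,k₃}`. -/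
noncomputable def g3 (k1 k2 k3 : ℕ) : PowerSeries ℚ := gb3 0 0 0 k1 k2 k3

/-- The shuffle-regularized series `g^sh_{k₁,k₂}`. -/
noncomputable def gsh2 (k1 k2 : ℕ) : PowerSeries ℚ :=
  g2 k1 k2 + (if k1 = 1 then (1/2 : ℚ) else 0) • (gb 1 k2 - g k2)

/-- The shuffle-regularized series `g^sh_{k₁,k₂,k₃}`. -/
noncomputable def gsh3 (k1 k2 k3 : ℕ) : PowerSeries ℚ :=
  g3 k1 k2 k3
    + (if k1 = 1 then (1/2 : ℚ) else 0) • (gb2 1 0 k2 k3 - g2 k2 k3)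
    + (if k2 = 1 then (1/2 : ℚ) else 0) • (gb2 0 1 k1 k3 - gb2 1 0 k1 k3 - g2 k1 k3)
    + (if k1 * k2 = 1 then (1 : ℚ) else 0) •
        ((1/6 : ℚ) • gb 2 k3 - (1/4 : ℚ) • gb 1 k3 + (1/6 : ℚ) • g k3)

/-- The operator `d̂ = q·d/dq` on formal power series. -/
noncomputable def qd (f : PowerSeries ℚ) : PowerSeries ℚ :=
  PowerSeries.mk fun n => (n : ℚ) * PowerSeries.coeff n f

/-- The spanning set: `1`, the `g^sh` of depth ≤ 3 and weight ≤ N. -/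
def gshSpanSet (N : ℕ) : Set (PowerSeries ℚ) :=
  {1} ∪ {f | ∃ m, 1 ≤ m ∧ m ≤ N ∧ f = g m}
      ∪ {f | ∃ a b, 1 ≤ a ∧ 1 ≤ b ∧ a + b ≤ N ∧ f = gsh2 a b}
      ∪ {f | ∃ a b c, 1 ≤ a ∧ 1 ≤ b ∧ 1 ≤ c ∧ a + b + c ≤ N ∧ f = gsh3 a b c}

/-!
Every series here is a sum over the partitions `n = u₁v₁ + ⋯ + u_rv_r` with `0 < u₁ < ⋯ < u_r`
and `v_i > 0`, weighted by a function of the `u_i, v_i`. A product of two such sums is again of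
this shape (the stuffle rule): sort the `u`'s, and where two of them coincide merge the `v`'s,
which produces a convolution in `v`, by Faulhaber a polynomial of controlled degree. Conjugating
the partitions (reading the Young diagram by columns) exchanges the roles of `u` and `v` and
gives a second expansion of the same product. Comparing the two expansions of `g₁ g_k` and of
`g₁ g_{a,b}` expresses `g^{(1)}_k` and `g^{(0,1)}_{a,b}` through the `g^sh`. Finally
`g^{(1,0)}_{k₁,k₂}` enters the stuffle expansion of `g^{(1)}_{k₁} g_{k₂}` with coefficient `1`, but
with coefficient `1/2` when that product is computed from the formula for `g^{(1)}_{k₁}`;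
subtracting the two isolates it.
-/

namespace GshSpan

open scoped Nat

def divPow (p : ℕ) (x : ℚ) : ℚ := x ^ p / p !

@[simp] lemma divPow_zero (x : ℚ) : divPow 0 x = 1 := by simp [divPow]

@[simp] lemma divPow_one (x : ℚ) : divPow 1 x = x := by simp [divPow]

lemma divPow_add (n : ℕ) (x y : ℚ) :
    divPow n (x + y) = ∑ p ∈ antidiagonal n, divPow p.1 x * divPow p.2 y := by
  rw [divPow, (Commute.all x y).add_pow', sum_div]
  refine sum_congr rfl fun p hp => ?_
  obtain rfl := mem_antidiagonal.1 hp
  have h := Nat.add_choose_mul_factorial_mul_factorial p.1 p.2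
  rw [Nat.choose_symm_add, divPow, divPow, nsmul_eq_mul, ← h]
  have hc : ((p.1 + p.2).choose p.2 : ℚ) ≠ 0 := mod_cast (Nat.choose_pos (Nat.le_add_left _ _)).ne'
  push_cast
  field_simp

def ser1 (W : ℕ → ℕ → ℚ) : PowerSeries ℚ :=
  mk fun n => ∑ u ∈ n.divisors, W u (n / u)

def ser2 (W : ℕ → ℕ → ℕ → ℕ → ℚ) : PowerSeries ℚ :=
  mk fun n =>
    ∑ u1 ∈ range (n+1), ∑ u2 ∈ range (n+1), ∑ v1 ∈ range (n+1), ∑ v2 ∈ range (n+1),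
      if 0 < u1 ∧ u1 < u2 ∧ 0 < v1 ∧ 0 < v2 ∧ u1 * v1 + u2 * v2 = n then W u1 u2 v1 v2 else 0

def ser3 (W : ℕ → ℕ → ℕ → ℕ → ℕ → ℕ → ℚ) : PowerSeries ℚ :=
  mk fun n =>
    ∑ u1 ∈ range (n+1), ∑ u2 ∈ range (n+1), ∑ u3 ∈ range (n+1),
    ∑ v1 ∈ range (n+1), ∑ v2 ∈ range (n+1), ∑ v3 ∈ range (n+1),
      if 0 < u1 ∧ u1 < u2 ∧ u2 < u3 ∧ 0 < v1 ∧ 0 < v2 ∧ 0 < v3 ∧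
          u1 * v1 + u2 * v2 + u3 * v3 = n then W u1 u2 u3 v1 v2 v3 else 0

lemma gb_eq_ser1 (d k : ℕ) : gb d k = ser1 fun u v => divPow d u * divPow (k - 1) v := rfl

lemma gb2_eq_ser2 (d1 d2 k1 k2 : ℕ) :
    gb2 d1 d2 k1 k2 = ser2 fun u1 u2 v1 v2 =>
      divPow d1 u1 * divPow d2 u2 * divPow (k1 - 1) v1 * divPow (k2 - 1) v2 :=
  rfl

lemma gb3_eq_ser3 (d1 d2 d3 k1 k2 k3 : ℕ) :
    gb3 d1 d2 d3 k1 k2 k3 =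
      ser3 fun u1 u2 u3 v1 v2 v3 => divPow d1 u1 * divPow d2 u2 * divPow d3 u3 *
        divPow (k1 - 1) v1 * divPow (k2 - 1) v2 * divPow (k3 - 1) v3 :=
  rfl

def ordIdx2 (n : ℕ) : Finset ((ℕ × ℕ) × ℕ × ℕ) :=
  ((range (n+1) ×ˢ range (n+1)) ×ˢ (range (n+1) ×ˢ range (n+1))).filter fun x =>
    0 < x.1.1 ∧ x.1.1 < x.1.2 ∧ 0 < x.2.1 ∧ 0 < x.2.2 ∧ x.1.1 * x.2.1 + x.1.2 * x.2.2 = n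

def ordIdx3 (n : ℕ) : Finset ((ℕ × ℕ × ℕ) × ℕ × ℕ × ℕ) :=
  ((range (n+1) ×ˢ range (n+1) ×ˢ range (n+1)) ×ˢ
      (range (n+1) ×ˢ range (n+1) ×ˢ range (n+1))).filter fun x =>
    0 < x.1.1 ∧ x.1.1 < x.1.2.1 ∧ x.1.2.1 < x.1.2.2 ∧ 0 < x.2.1 ∧ 0 < x.2.2.1 ∧ 0 < x.2.2.2 ∧
      x.1.1 * x.2.1 + x.1.2.1 * x.2.2.1 + x.1.2.2 * x.2.2.2 = n

lemma coeff_ser1 (W : ℕ → ℕ → ℚ) (n : ℕ) :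
    coeff n (ser1 W) = ∑ x ∈ n.divisorsAntidiagonal, W x.1 x.2 := by
  rw [ser1, coeff_mk, Nat.sum_divisorsAntidiagonal (f := W)]

lemma coeff_ser2 (W : ℕ → ℕ → ℕ → ℕ → ℚ) (n : ℕ) :
    coeff n (ser2 W) = ∑ x ∈ ordIdx2 n, W x.1.1 x.1.2 x.2.1 x.2.2 := by
  simp only [ser2, coeff_mk, ordIdx2, sum_filter, sum_product]

lemma coeff_ser3 (W : ℕ → ℕ → ℕ → ℕ → ℕ → ℕ → ℚ) (n : ℕ) :
    coeff n (ser3 W) = ∑ x ∈ ordIdx3 n, W x.1.1 x.1.2.1 x.1.2.2 x.2.1 x.2.2.1 x.2.2.2 := by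
  simp only [ser3, coeff_mk, ordIdx3, sum_filter, sum_product]

lemma le_mul_and_le_mul {u v : ℕ} (hu : 0 < u) (hv : 0 < v) : u ≤ u * v ∧ v ≤ u * v :=
  ⟨Nat.le_mul_of_pos_right u hv, Nat.le_mul_of_pos_left v hu⟩

@[simp] lemma mem_ordIdx2 {n : ℕ} {x : (ℕ × ℕ) × ℕ × ℕ} :
    x ∈ ordIdx2 n ↔
      0 < x.1.1 ∧ x.1.1 < x.1.2 ∧ 0 < x.2.1 ∧ 0 < x.2.2 ∧ x.1.1 * x.2.1 + x.1.2 * x.2.2 = n := by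
  obtain ⟨⟨u1, u2⟩, v1, v2⟩ := x
  simp only [ordIdx2, mem_filter, mem_product, mem_range_succ_iff, and_iff_right_iff_imp]
  rintro ⟨h1, h12, h3, h4, rfl⟩
  have := le_mul_and_le_mul h1 h3
  have := le_mul_and_le_mul (h1.trans h12) h4
  omega

@[simp] lemma mem_ordIdx3 {n : ℕ} {x : (ℕ × ℕ × ℕ) × ℕ × ℕ × ℕ} :
    x ∈ ordIdx3 n ↔
      0 < x.1.1 ∧ x.1.1 < x.1.2.1 ∧ x.1.2.1 < x.1.2.2 ∧ 0 < x.2.1 ∧ 0 < x.2.2.1 ∧ 0 < x.2.2.2 ∧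
        x.1.1 * x.2.1 + x.1.2.1 * x.2.2.1 + x.1.2.2 * x.2.2.2 = n := by
  obtain ⟨⟨u1, u2, u3⟩, v1, v2, v3⟩ := x
  simp only [ordIdx3, mem_filter, mem_product, mem_range_succ_iff, and_iff_right_iff_imp]
  rintro ⟨h1, h12, h23, h4, h5, h6, rfl⟩
  have := le_mul_and_le_mul h1 h4
  have := le_mul_and_le_mul (h1.trans h12) h5
  have := le_mul_and_le_mul ((h1.trans h12).trans h23) h6
  omega

lemma ser1_congr {W W' : ℕ → ℕ → ℚ} (h : ∀ u v, 0 < u → 0 < v → W u v = W' u v) :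
    ser1 W = ser1 W' := by
  ext n
  simp only [coeff_ser1]
  exact sum_congr rfl fun x hx => h _ _
    (Nat.pos_of_ne_zero (Nat.left_ne_zero_of_mem_divisorsAntidiagonal hx))
    (Nat.pos_of_ne_zero (Nat.right_ne_zero_of_mem_divisorsAntidiagonal hx))

lemma ser2_congr {W W' : ℕ → ℕ → ℕ → ℕ → ℚ}
    (h : ∀ u1 u2 v1 v2, 0 < u1 → u1 < u2 → 0 < v1 → 0 < v2 → W u1 u2 v1 v2 = W' u1 u2 v1 v2) :
    ser2 W = ser2 W' := by
  ext n
  simp only [coeff_ser2]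
  refine sum_congr rfl fun x hx => ?_
  obtain ⟨h1, h2, h3, h4, -⟩ := mem_ordIdx2.1 hx
  exact h _ _ _ _ h1 h2 h3 h4

lemma ser3_congr {W W' : ℕ → ℕ → ℕ → ℕ → ℕ → ℕ → ℚ}
    (h : ∀ u1 u2 u3 v1 v2 v3, 0 < u1 → u1 < u2 → u2 < u3 → 0 < v1 → 0 < v2 → 0 < v3 →
      W u1 u2 u3 v1 v2 v3 = W' u1 u2 u3 v1 v2 v3) :
    ser3 W = ser3 W' := by
  ext n
  simp only [coeff_ser3]
  refine sum_congr rfl fun x hx => ?_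
  obtain ⟨h1, h2, h3, h4, h5, h6, -⟩ := mem_ordIdx3.1 hx
  exact h _ _ _ _ _ _ h1 h2 h3 h4 h5 h6

lemma ser1_sub (W W' : ℕ → ℕ → ℚ) : ser1 (fun u v => W u v - W' u v) = ser1 W - ser1 W' := by
  ext n
  simp [coeff_ser1, sum_sub_distrib]

lemma ser1_const_mul (c : ℚ) (W : ℕ → ℕ → ℚ) : ser1 (fun u v => c * W u v) = c • ser1 W := by
  ext n
  simp [coeff_ser1, mul_sum]

lemma ser1_sum {ι : Type*} (s : Finset ι) (W : ι → ℕ → ℕ → ℚ) :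
    ser1 (fun u v => ∑ i ∈ s, W i u v) = ∑ i ∈ s, ser1 (W i) := by
  ext n
  simp [coeff_ser1, sum_comm (s := s)]

lemma ser2_sub (W W' : ℕ → ℕ → ℕ → ℕ → ℚ) :
    ser2 (fun u1 u2 v1 v2 => W u1 u2 v1 v2 - W' u1 u2 v1 v2) = ser2 W - ser2 W' := by
  ext n
  simp [coeff_ser2, sum_sub_distrib]

lemma ser2_const_mul (c : ℚ) (W : ℕ → ℕ → ℕ → ℕ → ℚ) :
    ser2 (fun u1 u2 v1 v2 => c * W u1 u2 v1 v2) = c • ser2 W := by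
  ext n
  simp [coeff_ser2, mul_sum]

lemma ser2_sum {ι : Type*} (s : Finset ι) (W : ι → ℕ → ℕ → ℕ → ℕ → ℚ) :
    ser2 (fun u1 u2 v1 v2 => ∑ i ∈ s, W i u1 u2 v1 v2) = ∑ i ∈ s, ser2 (W i) := by
  ext n
  simp [coeff_ser2, sum_comm (s := s)]

lemma ser3_sum {ι : Type*} (s : Finset ι) (W : ι → ℕ → ℕ → ℕ → ℕ → ℕ → ℕ → ℚ) :
    ser3 (fun u1 u2 u3 v1 v2 v3 => ∑ i ∈ s, W i u1 u2 u3 v1 v2 v3) = ∑ i ∈ s, ser3 (W i) := by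
  ext n
  simp [coeff_ser3, sum_comm (s := s)]

lemma sum_comp_of_involutive_on {α β : Type*} [AddCommMonoid β] {s : Finset α} {σ : α → α}
    (hs : ∀ x ∈ s, σ x ∈ s) (hσ : ∀ x ∈ s, σ (σ x) = x) (f : α → β) :
    ∑ x ∈ s, f x = ∑ x ∈ s, f (σ x) :=
  sum_nbij' σ σ hs hs hσ hσ fun x hx => by rw [hσ x hx]

lemma ser1_swap (W : ℕ → ℕ → ℚ) : ser1 W = ser1 fun u v => W v u := by
  ext n
  simp only [coeff_ser1]
  exact sum_comp_of_involutive_on (fun _ => Nat.swap_mem_divisorsAntidiagonal.2)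
    (fun x _ => x.swap_swap) _

/-- Conjugation of the partition `u₁v₁ + u₂v₂` (its Young diagram read by columns): the parts
`u₁ < u₂` with multiplicities `v₁, v₂` become `v₂ < v₁ + v₂` with multiplicities `u₂ - u₁, u₁`. -/
def conj2 (x : (ℕ × ℕ) × ℕ × ℕ) : (ℕ × ℕ) × ℕ × ℕ :=
  ((x.2.2, x.2.1 + x.2.2), (x.1.2 - x.1.1, x.1.1))

lemma conj2_mem {n : ℕ} {x : (ℕ × ℕ) × ℕ × ℕ} (hx : x ∈ ordIdx2 n) : conj2 x ∈ ordIdx2 n := by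
  obtain ⟨⟨u1, u2⟩, v1, v2⟩ := x
  simp only [mem_ordIdx2] at hx
  obtain ⟨h1, h12, h3, h4, rfl⟩ := hx
  obtain ⟨d, rfl⟩ := Nat.exists_eq_add_of_lt h12
  simp only [conj2, mem_ordIdx2]
  refine ⟨h4, by omega, by omega, h1, ?_⟩
  rw [show u1 + d + 1 - u1 = d + 1 by omega]
  ring

lemma conj2_conj2 {n : ℕ} {x : (ℕ × ℕ) × ℕ × ℕ} (hx : x ∈ ordIdx2 n) : conj2 (conj2 x) = x := by
  obtain ⟨⟨u1, u2⟩, v1, v2⟩ := x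
  simp only [mem_ordIdx2] at hx
  simp only [conj2, Prod.mk.injEq, true_and, and_true]
  omega

lemma ser2_conj (W : ℕ → ℕ → ℕ → ℕ → ℚ) :
    ser2 W = ser2 fun u1 u2 v1 v2 => W v2 (v1 + v2) (u2 - u1) u1 := by
  ext n
  simp only [coeff_ser2]
  exact sum_comp_of_involutive_on (fun _ => conj2_mem) (fun _ => conj2_conj2) _

def conj3 (x : (ℕ × ℕ × ℕ) × ℕ × ℕ × ℕ) : (ℕ × ℕ × ℕ) × ℕ × ℕ × ℕ :=
  ((x.2.2.2, x.2.2.1 + x.2.2.2, x.2.1 + x.2.2.1 + x.2.2.2),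
    (x.1.2.2 - x.1.2.1, x.1.2.1 - x.1.1, x.1.1))

lemma conj3_mem {n : ℕ} {x : (ℕ × ℕ × ℕ) × ℕ × ℕ × ℕ} (hx : x ∈ ordIdx3 n) :
    conj3 x ∈ ordIdx3 n := by
  obtain ⟨⟨u1, u2, u3⟩, v1, v2, v3⟩ := x
  simp only [mem_ordIdx3] at hx
  obtain ⟨h1, h12, h23, h4, h5, h6, rfl⟩ := hx
  obtain ⟨d, rfl⟩ := Nat.exists_eq_add_of_lt h12
  obtain ⟨e, rfl⟩ := Nat.exists_eq_add_of_lt h23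
  simp only [conj3, mem_ordIdx3]
  refine ⟨h6, by omega, by omega, by omega, by omega, h1, ?_⟩
  rw [show u1 + d + 1 + e + 1 - (u1 + d + 1) = e + 1 by omega,
    show u1 + d + 1 - u1 = d + 1 by omega]
  ring

lemma conj3_conj3 {n : ℕ} {x : (ℕ × ℕ × ℕ) × ℕ × ℕ × ℕ} (hx : x ∈ ordIdx3 n) :
    conj3 (conj3 x) = x := by
  obtain ⟨⟨u1, u2, u3⟩, v1, v2, v3⟩ := x
  simp only [mem_ordIdx3] at hx
  simp only [conj3, Prod.mk.injEq, true_and, and_true]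
  omega

lemma ser3_conj (W : ℕ → ℕ → ℕ → ℕ → ℕ → ℕ → ℚ) :
    ser3 W = ser3 fun u1 u2 u3 v1 v2 v3 =>
      W v3 (v2 + v3) (v1 + v2 + v3) (u3 - u2) (u2 - u1) u1 := by
  ext n
  simp only [coeff_ser3]
  exact sum_comp_of_involutive_on (fun _ => conj3_mem) (fun _ => conj3_conj3) _

def mulIdx11 (n : ℕ) : Finset ((ℕ × ℕ) × ℕ × ℕ) :=
  ((range (n+1) ×ˢ range (n+1)) ×ˢ (range (n+1) ×ˢ range (n+1))).filter fun x =>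
    0 < x.1.1 ∧ 0 < x.1.2 ∧ 0 < x.2.1 ∧ 0 < x.2.2 ∧ x.1.1 * x.1.2 + x.2.1 * x.2.2 = n

@[simp] lemma mem_mulIdx11 {n : ℕ} {x : (ℕ × ℕ) × ℕ × ℕ} :
    x ∈ mulIdx11 n ↔
      0 < x.1.1 ∧ 0 < x.1.2 ∧ 0 < x.2.1 ∧ 0 < x.2.2 ∧ x.1.1 * x.1.2 + x.2.1 * x.2.2 = n := by
  obtain ⟨⟨u, v⟩, u', v'⟩ := x
  simp only [mulIdx11, mem_filter, mem_product, mem_range_succ_iff, and_iff_right_iff_imp]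
  rintro ⟨h1, h2, h3, h4, rfl⟩
  have := le_mul_and_le_mul h1 h2
  have := le_mul_and_le_mul h3 h4
  omega

lemma coeff_ser1_mul_ser1 (W W' : ℕ → ℕ → ℚ) (n : ℕ) :
    coeff n (ser1 W * ser1 W') = ∑ x ∈ mulIdx11 n, W x.1.1 x.1.2 * W' x.2.1 x.2.2 := by
  simp only [coeff_mul, coeff_ser1, sum_mul_sum, ← sum_product', sum_sigma']
  refine sum_nbij' (fun z => z.2) (fun x => ⟨(x.1.1 * x.1.2, x.2.1 * x.2.2), x⟩)
    ?_ ?_ ?_ (fun _ _ => rfl) (fun _ _ => rfl)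
  · rintro ⟨⟨a, b⟩, ⟨u, v⟩, u', v'⟩ h
    simp only [mem_sigma, HasAntidiagonal.mem_antidiagonal, mem_product,
      Nat.mem_divisorsAntidiagonal] at h
    obtain ⟨rfl, ⟨rfl, h1⟩, rfl, h2⟩ := h
    simp only [mul_ne_zero_iff] at h1 h2
    simp only [mem_mulIdx11, and_true]
    omega
  · rintro ⟨⟨u, v⟩, u', v'⟩ h
    simp only [mem_mulIdx11] at h
    simp only [mem_sigma, HasAntidiagonal.mem_antidiagonal, mem_product,
      Nat.mem_divisorsAntidiagonal, mul_ne_zero_iff, true_and]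
    omega
  · rintro ⟨⟨a, b⟩, ⟨u, v⟩, u', v'⟩ h
    simp only [mem_sigma, HasAntidiagonal.mem_antidiagonal, mem_product,
      Nat.mem_divisorsAntidiagonal] at h
    obtain ⟨rfl, ⟨rfl, -⟩, rfl, -⟩ := h
    rfl

lemma sum_mulIdx11_lt (W W' : ℕ → ℕ → ℚ) (n : ℕ) :
    ∑ x ∈ (mulIdx11 n).filter (fun x => x.1.1 < x.2.1), W x.1.1 x.1.2 * W' x.2.1 x.2.2 =
      coeff n (ser2 fun u1 u2 v1 v2 => W u1 v1 * W' u2 v2) := by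
  rw [coeff_ser2]
  refine sum_nbij' (fun x => ((x.1.1, x.2.1), (x.1.2, x.2.2)))
    (fun y => ((y.1.1, y.2.1), (y.1.2, y.2.2))) ?_ ?_ (fun _ _ => rfl) (fun _ _ => rfl)
    (fun _ _ => rfl)
  · rintro ⟨⟨u, v⟩, u', v'⟩ h
    simp only [mem_filter, mem_mulIdx11] at h
    simp only [mem_ordIdx2]
    omega
  · rintro ⟨⟨u1, u2⟩, v1, v2⟩ h
    simp only [mem_ordIdx2] at h
    simp only [mem_filter, mem_mulIdx11]
    omega

lemma sum_mulIdx11_gt (W W' : ℕ → ℕ → ℚ) (n : ℕ) :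
    ∑ x ∈ (mulIdx11 n).filter (fun x => x.2.1 < x.1.1), W x.1.1 x.1.2 * W' x.2.1 x.2.2 =
      coeff n (ser2 fun u1 u2 v1 v2 => W' u1 v1 * W u2 v2) := by
  rw [coeff_ser2]
  refine sum_nbij' (fun x => ((x.2.1, x.1.1), (x.2.2, x.1.2)))
    (fun y => ((y.1.2, y.2.2), (y.1.1, y.2.1))) ?_ ?_ (fun _ _ => rfl) (fun _ _ => rfl)
    (fun _ _ => mul_comm _ _)
  · rintro ⟨⟨u, v⟩, u', v'⟩ h
    simp only [mem_filter, mem_mulIdx11] at h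
    simp only [mem_ordIdx2]
    omega
  · rintro ⟨⟨u1, u2⟩, v1, v2⟩ h
    simp only [mem_ordIdx2] at h
    simp only [mem_filter, mem_mulIdx11]
    omega

lemma sum_mulIdx11_eq (W W' : ℕ → ℕ → ℚ) (n : ℕ) :
    ∑ x ∈ (mulIdx11 n).filter (fun x => x.1.1 = x.2.1), W x.1.1 x.1.2 * W' x.2.1 x.2.2 =
      coeff n (ser1 fun u w => ∑ v ∈ Ico 1 w, W u v * W' u (w - v)) := by
  rw [coeff_ser1, sum_sigma']
  refine sum_nbij' (fun x => ⟨(x.1.1, x.1.2 + x.2.2), x.1.2⟩)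
    (fun z => ((z.1.1, z.2), (z.1.1, z.1.2 - z.2))) ?_ ?_ ?_ ?_ ?_
  · rintro ⟨⟨u, v⟩, u', v'⟩ h
    simp only [mem_filter, mem_mulIdx11] at h
    obtain ⟨⟨hu, hv, -, hv', rfl⟩, rfl⟩ := h
    simp only [mem_sigma, Nat.mem_divisorsAntidiagonal, mem_Ico, mul_add, true_and]
    exact ⟨by positivity, hv, by omega⟩
  · rintro ⟨⟨u, w⟩, v⟩ h
    simp only [mem_sigma, Nat.mem_divisorsAntidiagonal, mem_Ico] at h
    obtain ⟨⟨rfl, hw⟩, hv, hvw⟩ := h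
    have hu := Nat.pos_of_ne_zero (left_ne_zero_of_mul hw)
    simp only [mem_filter, mem_mulIdx11, ← mul_add, and_true]
    exact ⟨hu, hv, hu, by omega, by congr 1; omega⟩
  · rintro ⟨⟨u, v⟩, u', v'⟩ h
    simp only [mem_filter] at h
    simp only [h.2, Nat.add_sub_cancel_left]
  · rintro ⟨⟨u, w⟩, v⟩ h
    simp only [mem_sigma, mem_Ico] at h
    simp only [Nat.add_sub_cancel' h.2.2.le]
  · rintro ⟨⟨u, v⟩, u', v'⟩ h
    simp only [mem_filter] at h
    simp only [h.2, Nat.add_sub_cancel_left]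

lemma sum_eq_sum_filter_lt_add_gt_add_eq {α β : Type*} [AddCommMonoid β] (s : Finset α)
    (a b : α → ℕ) (f : α → β) :
    ∑ x ∈ s, f x = ∑ x ∈ s.filter (fun x => a x < b x), f x +
      ∑ x ∈ s.filter (fun x => b x < a x), f x + ∑ x ∈ s.filter (fun x => a x = b x), f x := by
  simp only [sum_filter, ← sum_add_distrib]
  refine sum_congr rfl fun x _ => ?_
  split_ifs <;> first | omega | simp

lemma ser1_mul_ser1 (W W' : ℕ → ℕ → ℚ) :
    ser1 W * ser1 W' = ser2 (fun u1 u2 v1 v2 => W u1 v1 * W' u2 v2) +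
      ser2 (fun u1 u2 v1 v2 => W' u1 v1 * W u2 v2) +
      ser1 (fun u w => ∑ v ∈ Ico 1 w, W u v * W' u (w - v)) := by
  ext n
  rw [coeff_ser1_mul_ser1, sum_eq_sum_filter_lt_add_gt_add_eq _
    (fun x => x.1.1) (fun x => x.2.1), sum_mulIdx11_lt, sum_mulIdx11_gt, sum_mulIdx11_eq,
    map_add, map_add]

def mulIdx12 (n : ℕ) : Finset ((ℕ × ℕ) × (ℕ × ℕ) × ℕ × ℕ) :=
  ((range (n+1) ×ˢ range (n+1)) ×ˢ
      ((range (n+1) ×ˢ range (n+1)) ×ˢ (range (n+1) ×ˢ range (n+1)))).filter fun x =>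
    0 < x.1.1 ∧ 0 < x.1.2 ∧ 0 < x.2.1.1 ∧ x.2.1.1 < x.2.1.2 ∧ 0 < x.2.2.1 ∧ 0 < x.2.2.2 ∧
      x.1.1 * x.1.2 + (x.2.1.1 * x.2.2.1 + x.2.1.2 * x.2.2.2) = n

@[simp] lemma mem_mulIdx12 {n : ℕ} {x : (ℕ × ℕ) × (ℕ × ℕ) × ℕ × ℕ} :
    x ∈ mulIdx12 n ↔
      0 < x.1.1 ∧ 0 < x.1.2 ∧ 0 < x.2.1.1 ∧ x.2.1.1 < x.2.1.2 ∧ 0 < x.2.2.1 ∧ 0 < x.2.2.2 ∧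
        x.1.1 * x.1.2 + (x.2.1.1 * x.2.2.1 + x.2.1.2 * x.2.2.2) = n := by
  obtain ⟨⟨u, v⟩, ⟨u1, u2⟩, v1, v2⟩ := x
  simp only [mulIdx12, mem_filter, mem_product, mem_range_succ_iff, and_iff_right_iff_imp]
  rintro ⟨h1, h2, h3, h34, h5, h6, rfl⟩
  have := le_mul_and_le_mul h1 h2
  have := le_mul_and_le_mul h3 h5
  have := le_mul_and_le_mul (h3.trans h34) h6
  omega

lemma coeff_ser1_mul_ser2 (W : ℕ → ℕ → ℚ) (V : ℕ → ℕ → ℕ → ℕ → ℚ) (n : ℕ) :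
    coeff n (ser1 W * ser2 V) =
      ∑ x ∈ mulIdx12 n, W x.1.1 x.1.2 * V x.2.1.1 x.2.1.2 x.2.2.1 x.2.2.2 := by
  simp only [coeff_mul, coeff_ser1, coeff_ser2, sum_mul_sum, ← sum_product', sum_sigma']
  refine sum_nbij' (fun z => z.2)
    (fun x => ⟨(x.1.1 * x.1.2, x.2.1.1 * x.2.2.1 + x.2.1.2 * x.2.2.2), x⟩)
    ?_ ?_ ?_ (fun _ _ => rfl) (fun _ _ => rfl)
  · rintro ⟨⟨a, b⟩, ⟨u, v⟩, ⟨u1, u2⟩, v1, v2⟩ h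
    simp only [mem_sigma, HasAntidiagonal.mem_antidiagonal, mem_product,
      Nat.mem_divisorsAntidiagonal, mem_ordIdx2] at h
    obtain ⟨rfl, ⟨rfl, h1⟩, h2⟩ := h
    simp only [mul_ne_zero_iff] at h1
    simp only [mem_mulIdx12]
    omega
  · rintro ⟨⟨u, v⟩, ⟨u1, u2⟩, v1, v2⟩ h
    simp only [mem_mulIdx12] at h
    simp only [mem_sigma, HasAntidiagonal.mem_antidiagonal, mem_product,
      Nat.mem_divisorsAntidiagonal, mul_ne_zero_iff, mem_ordIdx2, true_and, and_true]
    omega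
  · rintro ⟨⟨a, b⟩, ⟨u, v⟩, ⟨u1, u2⟩, v1, v2⟩ h
    simp only [mem_sigma, HasAntidiagonal.mem_antidiagonal, mem_product,
      Nat.mem_divisorsAntidiagonal, mem_ordIdx2] at h
    obtain ⟨rfl, ⟨rfl, -⟩, -, -, -, -, rfl⟩ := h
    rfl

lemma sum_mulIdx12_lt_fst (W : ℕ → ℕ → ℚ) (V : ℕ → ℕ → ℕ → ℕ → ℚ) (n : ℕ) :
    ∑ x ∈ (mulIdx12 n).filter (fun x => x.1.1 < x.2.1.1),
        W x.1.1 x.1.2 * V x.2.1.1 x.2.1.2 x.2.2.1 x.2.2.2 =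
      coeff n (ser3 fun u1 u2 u3 v1 v2 v3 => W u1 v1 * V u2 u3 v2 v3) := by
  rw [coeff_ser3]
  refine sum_nbij' (fun x => ((x.1.1, x.2.1.1, x.2.1.2), (x.1.2, x.2.2.1, x.2.2.2)))
    (fun y => ((y.1.1, y.2.1), (y.1.2.1, y.1.2.2), (y.2.2.1, y.2.2.2))) ?_ ?_
    (fun _ _ => rfl) (fun _ _ => rfl) (fun _ _ => rfl)
  · rintro ⟨⟨u, v⟩, ⟨u1, u2⟩, v1, v2⟩ h
    simp only [mem_filter, mem_mulIdx12] at h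
    simp only [mem_ordIdx3]
    omega
  · rintro ⟨⟨u1, u2, u3⟩, v1, v2, v3⟩ h
    simp only [mem_ordIdx3] at h
    simp only [mem_filter, mem_mulIdx12]
    omega

lemma sum_mulIdx12_between (W : ℕ → ℕ → ℚ) (V : ℕ → ℕ → ℕ → ℕ → ℚ) (n : ℕ) :
    ∑ x ∈ (mulIdx12 n).filter (fun x => x.2.1.1 < x.1.1 ∧ x.1.1 < x.2.1.2),
        W x.1.1 x.1.2 * V x.2.1.1 x.2.1.2 x.2.2.1 x.2.2.2 =
      coeff n (ser3 fun u1 u2 u3 v1 v2 v3 => W u2 v2 * V u1 u3 v1 v3) := by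
  rw [coeff_ser3]
  refine sum_nbij' (fun x => ((x.2.1.1, x.1.1, x.2.1.2), (x.2.2.1, x.1.2, x.2.2.2)))
    (fun y => ((y.1.2.1, y.2.2.1), (y.1.1, y.1.2.2), (y.2.1, y.2.2.2))) ?_ ?_
    (fun _ _ => rfl) (fun _ _ => rfl) (fun _ _ => rfl)
  · rintro ⟨⟨u, v⟩, ⟨u1, u2⟩, v1, v2⟩ h
    simp only [mem_filter, mem_mulIdx12] at h
    simp only [mem_ordIdx3]
    omega
  · rintro ⟨⟨u1, u2, u3⟩, v1, v2, v3⟩ h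
    simp only [mem_ordIdx3] at h
    simp only [mem_filter, mem_mulIdx12]
    omega

lemma sum_mulIdx12_gt_snd (W : ℕ → ℕ → ℚ) (V : ℕ → ℕ → ℕ → ℕ → ℚ) (n : ℕ) :
    ∑ x ∈ (mulIdx12 n).filter (fun x => x.2.1.2 < x.1.1),
        W x.1.1 x.1.2 * V x.2.1.1 x.2.1.2 x.2.2.1 x.2.2.2 =
      coeff n (ser3 fun u1 u2 u3 v1 v2 v3 => W u3 v3 * V u1 u2 v1 v2) := by
  rw [coeff_ser3]
  refine sum_nbij' (fun x => ((x.2.1.1, x.2.1.2, x.1.1), (x.2.2.1, x.2.2.2, x.1.2)))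
    (fun y => ((y.1.2.2, y.2.2.2), (y.1.1, y.1.2.1), (y.2.1, y.2.2.1))) ?_ ?_
    (fun _ _ => rfl) (fun _ _ => rfl) (fun _ _ => rfl)
  · rintro ⟨⟨u, v⟩, ⟨u1, u2⟩, v1, v2⟩ h
    simp only [mem_filter, mem_mulIdx12] at h
    simp only [mem_ordIdx3]
    omega
  · rintro ⟨⟨u1, u2, u3⟩, v1, v2, v3⟩ h
    simp only [mem_ordIdx3] at h
    simp only [mem_filter, mem_mulIdx12]
    omega

lemma sum_mulIdx12_eq_fst (W : ℕ → ℕ → ℚ) (V : ℕ → ℕ → ℕ → ℕ → ℚ) (n : ℕ) :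
    ∑ x ∈ (mulIdx12 n).filter (fun x => x.1.1 = x.2.1.1),
        W x.1.1 x.1.2 * V x.2.1.1 x.2.1.2 x.2.2.1 x.2.2.2 =
      coeff n (ser2 fun u1 u2 w v2 => ∑ v ∈ Ico 1 w, W u1 v * V u1 u2 (w - v) v2) := by
  rw [coeff_ser2, sum_sigma']
  refine sum_nbij' (fun x => ⟨((x.2.1.1, x.2.1.2), (x.1.2 + x.2.2.1, x.2.2.2)), x.1.2⟩)
    (fun z => ((z.1.1.1, z.2), (z.1.1.1, z.1.1.2), (z.1.2.1 - z.2, z.1.2.2))) ?_ ?_ ?_ ?_ ?_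
  · rintro ⟨⟨u, v⟩, ⟨u1, u2⟩, v1, v2⟩ h
    simp only [mem_filter, mem_mulIdx12] at h
    obtain ⟨⟨-, hv, hu, hu12, hv1, hv2, rfl⟩, rfl⟩ := h
    simp only [mem_sigma, mem_ordIdx2, mem_Ico, mul_add]
    omega
  · rintro ⟨⟨⟨u1, u2⟩, w, v2⟩, v⟩ h
    simp only [mem_sigma, mem_ordIdx2, mem_Ico] at h
    obtain ⟨⟨hu, hu12, -, hv2, rfl⟩, hv, hvw⟩ := h
    have hw : u1 * w = u1 * v + u1 * (w - v) := by rw [← mul_add]; congr 1; omega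
    simp only [mem_filter, mem_mulIdx12, and_true]
    omega
  · rintro ⟨⟨u, v⟩, ⟨u1, u2⟩, v1, v2⟩ h
    simp only [mem_filter] at h
    simp only [h.2, Nat.add_sub_cancel_left]
  · rintro ⟨⟨⟨u1, u2⟩, w, v2⟩, v⟩ h
    simp only [mem_sigma, mem_Ico] at h
    simp only [Nat.add_sub_cancel' h.2.2.le]
  · rintro ⟨⟨u, v⟩, ⟨u1, u2⟩, v1, v2⟩ h
    simp only [mem_filter] at h
    simp only [h.2, Nat.add_sub_cancel_left]

lemma sum_mulIdx12_eq_snd (W : ℕ → ℕ → ℚ) (V : ℕ → ℕ → ℕ → ℕ → ℚ) (n : ℕ) :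
    ∑ x ∈ (mulIdx12 n).filter (fun x => x.1.1 = x.2.1.2),
        W x.1.1 x.1.2 * V x.2.1.1 x.2.1.2 x.2.2.1 x.2.2.2 =
      coeff n (ser2 fun u1 u2 v1 w => ∑ v ∈ Ico 1 w, W u2 v * V u1 u2 v1 (w - v)) := by
  rw [coeff_ser2, sum_sigma']
  refine sum_nbij' (fun x => ⟨((x.2.1.1, x.2.1.2), (x.2.2.1, x.1.2 + x.2.2.2)), x.1.2⟩)
    (fun z => ((z.1.1.2, z.2), (z.1.1.1, z.1.1.2), (z.1.2.1, z.1.2.2 - z.2))) ?_ ?_ ?_ ?_ ?_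
  · rintro ⟨⟨u, v⟩, ⟨u1, u2⟩, v1, v2⟩ h
    simp only [mem_filter, mem_mulIdx12] at h
    obtain ⟨⟨-, hv, hu, hu12, hv1, hv2, rfl⟩, rfl⟩ := h
    simp only [mem_sigma, mem_ordIdx2, mem_Ico, mul_add]
    omega
  · rintro ⟨⟨⟨u1, u2⟩, v1, w⟩, v⟩ h
    simp only [mem_sigma, mem_ordIdx2, mem_Ico] at h
    obtain ⟨⟨hu, hu12, hv1, -, rfl⟩, hv, hvw⟩ := h
    have hw : u2 * w = u2 * v + u2 * (w - v) := by rw [← mul_add]; congr 1; omega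
    simp only [mem_filter, mem_mulIdx12, and_true]
    omega
  · rintro ⟨⟨u, v⟩, ⟨u1, u2⟩, v1, v2⟩ h
    simp only [mem_filter] at h
    simp only [h.2, Nat.add_sub_cancel_left]
  · rintro ⟨⟨⟨u1, u2⟩, v1, w⟩, v⟩ h
    simp only [mem_sigma, mem_Ico] at h
    simp only [Nat.add_sub_cancel' h.2.2.le]
  · rintro ⟨⟨u, v⟩, ⟨u1, u2⟩, v1, v2⟩ h
    simp only [mem_filter] at h
    simp only [h.2, Nat.add_sub_cancel_left]

lemma sum_eq_sum_filter_lt_eq_between_eq_gt {α β : Type*} [AddCommMonoid β] (s : Finset α)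
    (a b c : α → ℕ) (f : α → β) (hbc : ∀ x ∈ s, b x < c x) :
    ∑ x ∈ s, f x = ∑ x ∈ s.filter (fun x => a x < b x), f x +
      ∑ x ∈ s.filter (fun x => a x = b x), f x +
      ∑ x ∈ s.filter (fun x => b x < a x ∧ a x < c x), f x +
      ∑ x ∈ s.filter (fun x => a x = c x), f x + ∑ x ∈ s.filter (fun x => c x < a x), f x := by
  simp only [sum_filter, ← sum_add_distrib]
  refine sum_congr rfl fun x hx => ?_
  have := hbc x hx
  split_ifs <;> first | omega | simp

lemma ser1_mul_ser2 (W : ℕ → ℕ → ℚ) (V : ℕ → ℕ → ℕ → ℕ → ℚ) :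
    ser1 W * ser2 V =
      ser3 (fun u1 u2 u3 v1 v2 v3 => W u1 v1 * V u2 u3 v2 v3) +
      ser2 (fun u1 u2 w v2 => ∑ v ∈ Ico 1 w, W u1 v * V u1 u2 (w - v) v2) +
      ser3 (fun u1 u2 u3 v1 v2 v3 => W u2 v2 * V u1 u3 v1 v3) +
      ser2 (fun u1 u2 v1 w => ∑ v ∈ Ico 1 w, W u2 v * V u1 u2 v1 (w - v)) +
      ser3 (fun u1 u2 u3 v1 v2 v3 => W u3 v3 * V u1 u2 v1 v2) := by
  ext n
  rw [coeff_ser1_mul_ser2, sum_eq_sum_filter_lt_eq_between_eq_gt _ (fun x => x.1.1)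
      (fun x => x.2.1.1) (fun x => x.2.1.2) _ fun x hx => (mem_mulIdx12.1 hx).2.2.2.1,
    sum_mulIdx12_lt_fst, sum_mulIdx12_eq_fst, sum_mulIdx12_between, sum_mulIdx12_eq_snd,
    sum_mulIdx12_gt_snd]
  simp only [map_add]

/-- Only positive arguments are constrained: `∑ v ∈ Ico 1 w, 1 = w - 1` fails at `w = 0`. -/
def IsPolyOnPos (d : ℕ) (f : ℕ → ℚ) : Prop :=
  ∃ P : Polynomial ℚ, P.natDegree ≤ d ∧ ∀ w, 0 < w → f w = P.eval (w : ℚ)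

namespace IsPolyOnPos

variable {d e : ℕ} {f g : ℕ → ℚ}

lemma congr (hf : IsPolyOnPos d f) (h : ∀ w, 0 < w → f w = g w) : IsPolyOnPos d g := by
  obtain ⟨P, hP, hfP⟩ := hf
  exact ⟨P, hP, fun w hw => (h w hw).symm.trans (hfP w hw)⟩

lemma mono (hf : IsPolyOnPos d f) (hde : d ≤ e) : IsPolyOnPos e f := by
  obtain ⟨P, hP, hfP⟩ := hf
  exact ⟨P, hP.trans hde, hfP⟩

lemma sub (hf : IsPolyOnPos d f) (hg : IsPolyOnPos d g) : IsPolyOnPos d fun w => f w - g w := by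
  obtain ⟨P, hP, hfP⟩ := hf
  obtain ⟨Q, hQ, hgQ⟩ := hg
  refine ⟨P - Q, (Polynomial.natDegree_sub_le P Q).trans (max_le hP hQ), fun w hw => ?_⟩
  rw [Polynomial.eval_sub, ← hfP w hw, ← hgQ w hw]

lemma mul (hf : IsPolyOnPos d f) (hg : IsPolyOnPos e g) :
    IsPolyOnPos (d + e) fun w => f w * g w := by
  obtain ⟨P, hP, hfP⟩ := hf
  obtain ⟨Q, hQ, hgQ⟩ := hg
  refine ⟨P * Q, Polynomial.natDegree_mul_le.trans (Nat.add_le_add hP hQ), fun w hw => ?_⟩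
  rw [Polynomial.eval_mul, ← hfP w hw, ← hgQ w hw]

lemma const_mul (c : ℚ) (hf : IsPolyOnPos d f) : IsPolyOnPos d fun w => c * f w := by
  obtain ⟨P, hP, hfP⟩ := hf
  refine ⟨Polynomial.C c * P, (Polynomial.natDegree_C_mul_le c P).trans hP, fun w hw => ?_⟩
  rw [Polynomial.eval_mul, Polynomial.eval_C, ← hfP w hw]

lemma sum {ι : Type*} (s : Finset ι) {f : ι → ℕ → ℚ} (hf : ∀ i ∈ s, IsPolyOnPos d (f i)) :
    IsPolyOnPos d fun w => ∑ i ∈ s, f i w := by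
  choose P hP hfP using hf
  refine ⟨∑ i ∈ s.attach, P i.1 i.2,
    Polynomial.natDegree_sum_le_of_forall_le _ _ fun i _ => hP i.1 i.2, fun w hw => ?_⟩
  dsimp only
  rw [Polynomial.eval_finsetSum, ← sum_attach s]
  exact sum_congr rfl fun i _ => hfP i.1 i.2 w hw

lemma eq_sum_divPow (hf : IsPolyOnPos d f) :
    ∃ c : ℕ → ℚ, ∀ w, 0 < w → f w = ∑ e ∈ range (d + 1), c e * divPow e w := by
  obtain ⟨P, hP, hfP⟩ := hf
  refine ⟨fun e => P.coeff e * e !, fun w hw => ?_⟩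
  rw [hfP w hw, Polynomial.eval_eq_sum_range' (Nat.lt_succ_of_le hP)]
  refine sum_congr rfl fun e _ => ?_
  have : (e ! : ℚ) ≠ 0 := mod_cast e.factorial_ne_zero
  rw [divPow]
  field_simp

end IsPolyOnPos

lemma isPolyOnPos_const (c : ℚ) : IsPolyOnPos 0 fun _ => c :=
  ⟨Polynomial.C c, (Polynomial.natDegree_C c).le, fun _ _ => (Polynomial.eval_C).symm⟩

lemma isPolyOnPos_pow (p : ℕ) : IsPolyOnPos p fun w => (w : ℚ) ^ p :=
  ⟨Polynomial.X ^ p, (Polynomial.natDegree_X_pow p).le, fun w _ => by simp⟩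

lemma isPolyOnPos_divPow (p : ℕ) : IsPolyOnPos p fun w => divPow p w :=
  ((isPolyOnPos_pow p).const_mul (p ! : ℚ)⁻¹).congr fun w _ => by rw [divPow, inv_mul_eq_div]

lemma isPolyOnPos_sum_Ico_pow (m : ℕ) :
    IsPolyOnPos (m + 1) fun w => ∑ v ∈ Ico 1 w, (v : ℚ) ^ m := by
  have faulhaber : IsPolyOnPos (m + 1) fun w => ∑ v ∈ range w, (v : ℚ) ^ m := by
    refine (IsPolyOnPos.sum (range (m + 1)) fun i _ =>
      ((isPolyOnPos_pow (m + 1 - i)).const_mul (bernoulli i * (m + 1).choose i / (m + 1))).mono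
        (Nat.sub_le _ _)).congr fun w _ => ?_
    rw [sum_range_pow]
    exact sum_congr rfl fun i _ => by ring
  refine (faulhaber.sub ((isPolyOnPos_const ((0 : ℚ) ^ m)).mono (Nat.zero_le _))).congr
    fun w hw => ?_
  rw [sum_range_eq_add_Ico _ hw, Nat.cast_zero, add_sub_cancel_left]

lemma IsPolyOnPos.sum_Ico_mul_pow {d : ℕ} {f : ℕ → ℚ} (hf : IsPolyOnPos d f) (q : ℕ) :
    IsPolyOnPos (d + q + 1) fun w => ∑ v ∈ Ico 1 w, f v * ((w - v : ℕ) : ℚ) ^ q := by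
  have monomial (p : ℕ) :
      IsPolyOnPos (p + q + 1) fun w => ∑ v ∈ Ico 1 w, (v : ℚ) ^ p * ((w - v : ℕ) : ℚ) ^ q := by
    refine (IsPolyOnPos.sum (range (q + 1)) fun i hi =>
      (((isPolyOnPos_pow i).mul (isPolyOnPos_sum_Ico_pow (p + q - i))).const_mul
        ((-1) ^ (q - i) * q.choose i)).mono ?_).congr fun w _ => ?_
    · have := mem_range.1 hi
      omega
    · simp only [mul_sum]
      rw [sum_comm]
      refine sum_congr rfl fun v hv => ?_
      rw [Nat.cast_sub (mem_Ico.1 hv).2.le, sub_eq_add_neg, add_pow, mul_sum]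
      refine sum_congr rfl fun i hi => ?_
      rw [neg_pow, show p + q - i = p + (q - i) by have := mem_range.1 hi; omega, pow_add]
      ring
  obtain ⟨c, hc⟩ := hf.eq_sum_divPow
  refine (IsPolyOnPos.sum (range (d + 1)) fun e he =>
    ((monomial e).const_mul (c e / e !)).mono ?_).congr fun w _ => ?_
  · have := mem_range.1 he
    omega
  · simp only [mul_sum]
    rw [sum_comm]
    refine sum_congr rfl fun v hv => ?_
    rw [hc v (mem_Ico.1 hv).1, sum_mul]
    refine sum_congr rfl fun e _ => ?_
    rw [divPow]
    ring

lemma IsPolyOnPos.sum_Ico_mul_divPow {d : ℕ} {f : ℕ → ℚ} (hf : IsPolyOnPos d f) (q : ℕ) :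
    IsPolyOnPos (d + q + 1) fun w => ∑ v ∈ Ico 1 w, f v * divPow q (w - v : ℕ) :=
  ((hf.sum_Ico_mul_pow q).const_mul (q ! : ℚ)⁻¹).congr fun w _ => by
    simp only [mul_sum, divPow]
    exact sum_congr rfl fun v _ => by ring

lemma g_eq_ser1 (k : ℕ) : g k = ser1 fun _ v => divPow (k - 1) v :=
  (gb_eq_ser1 0 k).trans (ser1_congr fun _ _ _ _ => by simp)

lemma g_one_eq_ser1 : g 1 = ser1 fun _ _ => 1 := by
  simp [g_eq_ser1]

lemma g2_eq_ser2 (a b : ℕ) : g2 a b = ser2 fun _ _ v1 v2 => divPow (a - 1) v1 * divPow (b - 1) v2 :=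
  (gb2_eq_ser2 0 0 a b).trans (ser2_congr fun _ _ _ _ _ _ _ _ => by simp)

lemma g3_eq_ser3 (a b c : ℕ) :
    g3 a b c = ser3 fun _ _ _ v1 v2 v3 =>
      divPow (a - 1) v1 * divPow (b - 1) v2 * divPow (c - 1) v3 :=
  (gb3_eq_ser3 0 0 0 a b c).trans (ser3_congr fun _ _ _ _ _ _ _ _ _ _ _ _ => by simp)

lemma gsh2_one (b : ℕ) : gsh2 1 b = g2 1 b + (1 / 2 : ℚ) • (gb 1 b - g b) := by
  simp [gsh2]

lemma gsh2_of_ne_one {a : ℕ} (b : ℕ) (ha : a ≠ 1) : gsh2 a b = g2 a b := by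
  simp [gsh2, ha]

lemma gsh3_one_left {a : ℕ} (b : ℕ) (ha : a ≠ 1) :
    gsh3 1 a b = g3 1 a b + (1 / 2 : ℚ) • (gb2 1 0 a b - g2 a b) := by
  simp [gsh3, ha]

lemma gsh3_one_mid {a : ℕ} (b : ℕ) (ha : a ≠ 1) :
    gsh3 a 1 b = g3 a 1 b + (1 / 2 : ℚ) • (gb2 0 1 a b - gb2 1 0 a b - g2 a b) := by
  simp [gsh3, ha]

lemma gsh3_of_ne_one {a b : ℕ} (c : ℕ) (ha : a ≠ 1) (hb : b ≠ 1) : gsh3 a b c = g3 a b c := by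
  simp [gsh3, ha, hb, mul_eq_one]

abbrev gshSpan (N : ℕ) : Submodule ℚ (PowerSeries ℚ) := Submodule.span ℚ (gshSpanSet N)

lemma g_mem_gshSpan {N m : ℕ} (hm : 1 ≤ m) (hN : m ≤ N) : g m ∈ gshSpan N :=
  Submodule.subset_span (Or.inl (Or.inl (Or.inr ⟨m, hm, hN, rfl⟩)))

lemma gsh2_mem_gshSpan {N a b : ℕ} (ha : 1 ≤ a) (hb : 1 ≤ b) (hN : a + b ≤ N) :
    gsh2 a b ∈ gshSpan N :=
  Submodule.subset_span (Or.inl (Or.inr ⟨a, b, ha, hb, hN, rfl⟩))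

lemma gsh3_mem_gshSpan {N a b c : ℕ} (ha : 1 ≤ a) (hb : 1 ≤ b) (hc : 1 ≤ c)
    (hN : a + b + c ≤ N) : gsh3 a b c ∈ gshSpan N :=
  Submodule.subset_span (Or.inr ⟨a, b, c, ha, hb, hc, hN, rfl⟩)

lemma g3_mem_gshSpan {N a b c : ℕ} (ha : 2 ≤ a) (hb : 2 ≤ b) (hc : 1 ≤ c)
    (hN : a + b + c ≤ N) : g3 a b c ∈ gshSpan N := by
  rw [← gsh3_of_ne_one c (by omega) (by omega)]
  exact gsh3_mem_gshSpan (by omega) (by omega) hc hN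

lemma sum_antidiagonal_sub_ends_mem {R M : Type*} [Ring R] [AddCommGroup M] [Module R M]
    {S : Submodule R M} {n : ℕ} (hn : n ≠ 0) {F : ℕ × ℕ → M}
    (hF : ∀ i j, i + j = n → i ≠ 0 → j ≠ 0 → F (i, j) ∈ S) :
    ∑ p ∈ antidiagonal n, F p - F (0, n) - F (n, 0) ∈ S := by
  have h0 : (0, n) ∈ antidiagonal n := HasAntidiagonal.mem_antidiagonal.2 (zero_add n)
  have h1 : (n, 0) ∈ (antidiagonal n).erase (0, n) :=
    mem_erase.2 ⟨by simp [hn], HasAntidiagonal.mem_antidiagonal.2 (add_zero n)⟩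
  rw [← add_sum_erase _ _ h0, ← add_sum_erase _ _ h1, add_sub_cancel_left, add_sub_cancel_left]
  refine Submodule.sum_mem _ fun p hp => ?_
  simp only [mem_erase, ne_eq, Prod.ext_iff, HasAntidiagonal.mem_antidiagonal] at hp
  exact hF p.1 p.2 hp.2.2 (by omega) (by omega)

section PolyWeights

variable {S : Submodule ℚ (PowerSeries ℚ)} {d : ℕ} {f : ℕ → ℚ}

lemma ser1_mem_of_isPolyOnPos (hf : IsPolyOnPos d f) (A : ℕ → ℚ)
    (h : ∀ e ≤ d, ser1 (fun u w => A u * divPow e w) ∈ S) : ser1 (fun u w => A u * f w) ∈ S := by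
  obtain ⟨c, hc⟩ := hf.eq_sum_divPow
  rw [ser1_congr (W' := fun u w => ∑ e ∈ range (d + 1), c e * (A u * divPow e w))
    fun u w _ hw => by rw [hc w hw, mul_sum]; exact sum_congr rfl fun _ _ => by ring, ser1_sum]
  refine Submodule.sum_mem _ fun e he => ?_
  rw [ser1_const_mul]
  exact Submodule.smul_mem _ _ (h e (Nat.lt_succ_iff.1 (mem_range.1 he)))

lemma ser2_mem_of_isPolyOnPos_left (hf : IsPolyOnPos d f) (B : ℕ → ℚ)
    (h : ∀ e ≤ d, ser2 (fun _ _ v1 v2 => divPow e v1 * B v2) ∈ S) :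
    ser2 (fun _ _ v1 v2 => f v1 * B v2) ∈ S := by
  obtain ⟨c, hc⟩ := hf.eq_sum_divPow
  rw [ser2_congr (W' := fun _ _ v1 v2 => ∑ e ∈ range (d + 1), c e * (divPow e v1 * B v2))
    fun _ _ v1 _ _ _ hv1 _ => by rw [hc v1 hv1, sum_mul]; exact sum_congr rfl fun _ _ => by ring,
    ser2_sum]
  refine Submodule.sum_mem _ fun e he => ?_
  rw [ser2_const_mul]
  exact Submodule.smul_mem _ _ (h e (Nat.lt_succ_iff.1 (mem_range.1 he)))

lemma ser2_mem_of_isPolyOnPos_right (hf : IsPolyOnPos d f) (B : ℕ → ℚ)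
    (h : ∀ e ≤ d, ser2 (fun _ _ v1 v2 => B v1 * divPow e v2) ∈ S) :
    ser2 (fun _ _ v1 v2 => B v1 * f v2) ∈ S := by
  obtain ⟨c, hc⟩ := hf.eq_sum_divPow
  rw [ser2_congr (W' := fun _ _ v1 v2 => ∑ e ∈ range (d + 1), c e * (B v1 * divPow e v2))
    fun _ _ _ v2 _ _ _ hv2 => by rw [hc v2 hv2, mul_sum]; exact sum_congr rfl fun _ _ => by ring,
    ser2_sum]
  refine Submodule.sum_mem _ fun e he => ?_
  rw [ser2_const_mul]
  exact Submodule.smul_mem _ _ (h e (Nat.lt_succ_iff.1 (mem_range.1 he)))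

lemma ser1_mem_gshSpan {N : ℕ} (hf : IsPolyOnPos d f) (hN : d + 1 ≤ N) :
    ser1 (fun _ w => f w) ∈ gshSpan N := by
  simpa using ser1_mem_of_isPolyOnPos hf (fun _ => 1) fun e he => by
    simpa [g_eq_ser1] using g_mem_gshSpan (m := e + 1) (by omega) (by omega)

end PolyWeights

lemma gb_one_add_sum_eq {k : ℕ} (hk : 1 ≤ k) :
    ∃ f, IsPolyOnPos k f ∧
      gb 1 k + ∑ p ∈ antidiagonal (k - 1), g2 (p.1 + 1) (p.2 + 1) =
        g2 k 1 + ser1 (fun _ w => f w) + g k := by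
  have hf := (isPolyOnPos_const 1).sum_Ico_mul_divPow (k - 1)
  refine ⟨_, hf.mono (by omega), ?_⟩
  have hgk : g k = ser1 fun u _ => divPow (k - 1) u := by rw [g_eq_ser1, ser1_swap]
  have stuffle := ser1_mul_ser1 (fun _ _ => 1) (fun _ v => divPow (k - 1) v)
  have stuffleConj := ser1_mul_ser1 (fun _ _ => 1) (fun u _ => divPow (k - 1) u)
  rw [← g_one_eq_ser1, ← g_eq_ser1] at stuffle
  rw [← g_one_eq_ser1, ← hgk] at stuffleConj
  have h1k : ser2 (fun _ _ _ v2 => 1 * divPow (k - 1) v2) = g2 1 k := by simp [g2_eq_ser2]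
  have hk1 : ser2 (fun _ _ v1 _ => divPow (k - 1) v1 * 1) = g2 k 1 := by simp [g2_eq_ser2]
  have hSum : ser2 (fun _ u2 _ _ => 1 * divPow (k - 1) u2) =
      ∑ p ∈ antidiagonal (k - 1), g2 (p.1 + 1) (p.2 + 1) := by
    rw [ser2_conj, ser2_congr (W' := fun _ _ v1 v2 => ∑ p ∈ antidiagonal (k - 1),
      divPow p.1 v1 * divPow p.2 v2) fun _ _ _ _ _ _ _ _ => by push_cast; rw [one_mul, divPow_add],
      ser2_sum]
    exact sum_congr rfl fun p _ => by simp [g2_eq_ser2]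
  have h1k' : ser2 (fun u1 _ _ _ => divPow (k - 1) u1 * 1) = g2 1 k := by
    rw [ser2_conj]
    simp [g2_eq_ser2]
  have hMerge : ser1 (fun u w => ∑ _ ∈ Ico 1 w, 1 * divPow (k - 1) u) = gb 1 k - g k := by
    rw [ser1_swap, gb_eq_ser1, g_eq_ser1, ← ser1_sub]
    refine ser1_congr fun u _ hu _ => ?_
    simp [Nat.cast_sub hu, sub_mul]
  rw [h1k, hk1] at stuffle
  rw [hSum, h1k', hMerge] at stuffleConj
  linear_combination stuffle - stuffleConj

lemma gb_one_mem_gshSpan {k N : ℕ} (hk : 1 ≤ k) (hN : k + 1 ≤ N) : gb 1 k ∈ gshSpan N := by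
  obtain ⟨f, hf, hE⟩ := gb_one_add_sum_eq hk
  have hF : ser1 (fun _ w => f w) ∈ gshSpan N := ser1_mem_gshSpan hf hN
  have hg : g k ∈ gshSpan N := g_mem_gshSpan hk (by omega)
  obtain rfl | hk2 := eq_or_lt_of_le hk
  · have : gb 1 1 = ser1 (fun _ w => f w) + g 1 := by
      simp only [Nat.sub_self, Finset.Nat.antidiagonal_zero, sum_singleton] at hE
      linear_combination hE
    rw [this]
    exact add_mem hF hg
  have hMid := sum_antidiagonal_sub_ends_mem (S := gshSpan N) (n := k - 1) (by omega)
    (F := fun p => g2 (p.1 + 1) (p.2 + 1)) fun i j hij hi _ => by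
      rw [← gsh2_of_ne_one _ (by omega)]
      exact gsh2_mem_gshSpan (by omega) (by omega) (by omega)
  rw [zero_add, Nat.sub_add_cancel hk] at hMid
  have hsh := gsh2_mem_gshSpan (N := N) le_rfl hk (by omega)
  -- `gsh2 1 k` trades the inadmissible `g2 1 k` for `(gb 1 k - g k) / 2`, so `gb 1 k` survives
  -- with coefficient `1 / 2`.
  have key : gb 1 k = (2 : ℚ) • (ser1 (fun _ w => f w) -
      (∑ p ∈ antidiagonal (k - 1), g2 (p.1 + 1) (p.2 + 1) - g2 1 k - g2 k 1) - gsh2 1 k) + g k := by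
    linear_combination (norm := module) (2 : ℚ) • hE + (2 : ℚ) • gsh2_one k
  rw [key]
  exact add_mem (Submodule.smul_mem _ _ (sub_mem (sub_mem hF hMid) hsh)) hg

lemma g2_mem_gshSpan {a b N : ℕ} (ha : 1 ≤ a) (hb : 1 ≤ b) (hN : a + b ≤ N) :
    g2 a b ∈ gshSpan N := by
  obtain rfl | ha1 := eq_or_ne a 1
  · have key : g2 1 b = gsh2 1 b - (1 / 2 : ℚ) • (gb 1 b - g b) := by rw [gsh2_one]; abel
    rw [key]
    exact sub_mem (gsh2_mem_gshSpan ha hb hN) (Submodule.smul_mem _ _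
      (sub_mem (gb_one_mem_gshSpan hb (by omega)) (g_mem_gshSpan hb (by omega))))
  · rw [← gsh2_of_ne_one b ha1]
    exact gsh2_mem_gshSpan ha hb hN

lemma ser1_id_mul_mem_gshSpan {d N : ℕ} {f : ℕ → ℚ} (hf : IsPolyOnPos d f) (hN : d + 2 ≤ N) :
    ser1 (fun u w => u * f w) ∈ gshSpan N :=
  ser1_mem_of_isPolyOnPos hf _ fun e he => by
    simpa [gb_eq_ser1] using gb_one_mem_gshSpan (k := e + 1) (N := N) (by omega) (by omega)

lemma ser2_mem_gshSpan_left {d r N : ℕ} {f : ℕ → ℚ} (hf : IsPolyOnPos d f)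
    (hN : d + r + 2 ≤ N) : ser2 (fun _ _ v1 v2 => f v1 * divPow r v2) ∈ gshSpan N :=
  ser2_mem_of_isPolyOnPos_left hf _ fun e he => by
    simpa [g2_eq_ser2] using g2_mem_gshSpan (a := e + 1) (b := r + 1) (N := N) (by omega)
      (by omega) (by omega)

lemma ser2_mem_gshSpan_right {d r N : ℕ} {f : ℕ → ℚ} (hf : IsPolyOnPos d f)
    (hN : d + r + 2 ≤ N) : ser2 (fun _ _ v1 v2 => divPow r v1 * f v2) ∈ gshSpan N :=
  ser2_mem_of_isPolyOnPos_right hf _ fun e he => by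
    simpa [g2_eq_ser2] using g2_mem_gshSpan (a := r + 1) (b := e + 1) (N := N) (by omega)
      (by omega) (by omega)

lemma g_mul_g_mem_gshSpan {a b N : ℕ} (ha : 1 ≤ a) (hb : 1 ≤ b) (hN : a + b ≤ N) :
    g a * g b ∈ gshSpan N := by
  rw [g_eq_ser1 a, g_eq_ser1 b, ser1_mul_ser1, ← g2_eq_ser2, ← g2_eq_ser2]
  exact add_mem (add_mem (g2_mem_gshSpan ha hb hN) (g2_mem_gshSpan hb ha (by omega)))
    (ser1_mem_gshSpan ((isPolyOnPos_divPow (a - 1)).sum_Ico_mul_divPow (b - 1)) (by omega))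

lemma ser1_mul_g_mem_gshSpan {d b N : ℕ} {f : ℕ → ℚ} (hf : IsPolyOnPos d f) (hb : 1 ≤ b)
    (hN : d + 1 + b ≤ N) : ser1 (fun _ w => f w) * g b ∈ gshSpan N := by
  rw [g_eq_ser1 b, ser1_mul_ser1]
  exact add_mem (add_mem (ser2_mem_gshSpan_left hf (by omega))
    (ser2_mem_gshSpan_right hf (by omega)))
    (ser1_mem_gshSpan (hf.sum_Ico_mul_divPow (b - 1)) (by omega))

lemma g_mul_g2_eq (a b c : ℕ) :
    g c * g2 a b = g3 c a b +
      ser2 (fun _ _ v1 v2 =>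
        (∑ v ∈ Ico 1 v1, divPow (c - 1) v * divPow (a - 1) (v1 - v : ℕ)) * divPow (b - 1) v2) +
      g3 a c b +
      ser2 (fun _ _ v1 v2 =>
        divPow (a - 1) v1 * ∑ v ∈ Ico 1 v2, divPow (c - 1) v * divPow (b - 1) (v2 - v : ℕ)) +
      g3 a b c := by
  rw [g_eq_ser1, g2_eq_ser2, ser1_mul_ser2, g3_eq_ser3, g3_eq_ser3, g3_eq_ser3]
  refine congrArg₂ (· + ·)
    (congrArg₂ (· + ·) (congrArg₂ (· + ·) (congrArg₂ (· + ·) ?_ ?_) ?_) ?_) ?_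
  · exact ser3_congr fun _ _ _ _ _ _ _ _ _ _ _ _ => by ring
  · exact ser2_congr fun _ _ _ _ _ _ _ _ => by rw [sum_mul]; exact sum_congr rfl fun _ _ => by ring
  · exact ser3_congr fun _ _ _ _ _ _ _ _ _ _ _ _ => by ring
  · exact ser2_congr fun _ _ _ _ _ _ _ _ => by rw [mul_sum]; exact sum_congr rfl fun _ _ => by ring
  · exact ser3_congr fun _ _ _ _ _ _ _ _ _ _ _ _ => by ring

lemma g_mul_g2_sub_mem_gshSpan {a b c N : ℕ} (ha : 1 ≤ a) (hb : 1 ≤ b) (hc : 1 ≤ c)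
    (hN : c + a + b ≤ N) : g c * g2 a b - g3 c a b - g3 a c b - g3 a b c ∈ gshSpan N := by
  rw [g_mul_g2_eq]
  convert add_mem
    (ser2_mem_gshSpan_left (N := N) ((isPolyOnPos_divPow (c - 1)).sum_Ico_mul_divPow (a - 1))
      (r := b - 1) (by omega))
    (ser2_mem_gshSpan_right (N := N) ((isPolyOnPos_divPow (c - 1)).sum_Ico_mul_divPow (b - 1))
      (r := a - 1) (by omega)) using 1
  abel

lemma g2_mul_g_mem_gshSpan {a b c N : ℕ} (ha : 2 ≤ a) (hb : 2 ≤ b) (hc : 2 ≤ c)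
    (hN : a + b + c ≤ N) : g2 a b * g c ∈ gshSpan N := by
  have hU := g_mul_g2_sub_mem_gshSpan (N := N) (by omega) (by omega) (by omega) (by omega)
    (a := a) (b := b) (c := c)
  have key : g2 a b * g c =
      (g c * g2 a b - g3 c a b - g3 a c b - g3 a b c) + g3 c a b + g3 a c b + g3 a b c := by ring
  rw [key]
  exact add_mem (add_mem (add_mem hU (g3_mem_gshSpan hc ha (by omega) (by omega)))
    (g3_mem_gshSpan ha hc (by omega) (by omega))) (g3_mem_gshSpan ha hb (by omega) (by omega))

lemma g2_eq_ser2_conj (a b : ℕ) :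
    g2 a b = ser2 fun u1 u2 _ _ => divPow (a - 1) (u2 - u1 : ℕ) * divPow (b - 1) u1 := by
  rw [g2_eq_ser2, ser2_conj]

lemma ser2_merge_fst_conj_g2 (a b : ℕ) :
    ser2 (fun u1 u2 w _ => ∑ _ ∈ Ico 1 w, divPow (a - 1) (u2 - u1 : ℕ) * divPow (b - 1) u1) =
      gb2 0 1 a b - gb2 1 0 a b - g2 a b := by
  rw [gb2_eq_ser2, gb2_eq_ser2, g2_eq_ser2, ← ser2_sub, ← ser2_sub, ser2_conj]
  refine ser2_congr fun u1 u2 v1 v2 _ h12 _ _ => ?_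
  rw [sum_const, Nat.card_Ico, nsmul_eq_mul, Nat.cast_sub (by omega), Nat.cast_sub h12.le,
    Nat.add_sub_cancel]
  simp
  ring

lemma ser2_merge_snd_conj_g2 (a b : ℕ) :
    ser2 (fun u1 u2 _ w => ∑ _ ∈ Ico 1 w, divPow (a - 1) (u2 - u1 : ℕ) * divPow (b - 1) u1) =
      gb2 1 0 a b - g2 a b := by
  rw [gb2_eq_ser2, g2_eq_ser2, ← ser2_sub, ser2_conj]
  refine ser2_congr fun u1 _ v1 _ h1 _ _ _ => ?_
  rw [sum_const, Nat.card_Ico, nsmul_eq_mul, Nat.cast_sub h1, Nat.add_sub_cancel]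
  simp
  ring

lemma g_one_mul_g2_eq (a b : ℕ) :
    g 1 * g2 a b = g3 1 a b + ∑ p ∈ antidiagonal (a - 1), g3 (p.1 + 1) (p.2 + 1) b +
      ∑ p ∈ antidiagonal (b - 1), g3 a (p.1 + 1) (p.2 + 1) + gb2 0 1 a b - (2 : ℚ) • g2 a b := by
  have stuffle := ser1_mul_ser2 (fun _ _ => 1)
    (fun u1 u2 _ _ => divPow (a - 1) (u2 - u1 : ℕ) * divPow (b - 1) u1)
  rw [← g_one_eq_ser1, ← g2_eq_ser2_conj] at stuffle
  simp only [one_mul] at stuffle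
  have hFst : ser3 (fun _ u2 u3 _ _ _ => divPow (a - 1) (u3 - u2 : ℕ) * divPow (b - 1) u2) =
      ∑ p ∈ antidiagonal (b - 1), g3 a (p.1 + 1) (p.2 + 1) := by
    rw [ser3_conj, ser3_congr (W' := fun _ _ _ v1 v2 v3 => ∑ p ∈ antidiagonal (b - 1),
      divPow (a - 1) v1 * (divPow p.1 v2 * divPow p.2 v3)) fun _ _ _ _ _ _ _ _ _ _ _ _ => by
        rw [show ∀ x y z : ℕ, x + y + z - (y + z) = x by omega]
        push_cast
        rw [divPow_add, mul_sum], ser3_sum]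
    exact sum_congr rfl fun p _ => by simp [g3_eq_ser3, mul_assoc]
  have hMid : ser3 (fun u1 _ u3 _ _ _ => divPow (a - 1) (u3 - u1 : ℕ) * divPow (b - 1) u1) =
      ∑ p ∈ antidiagonal (a - 1), g3 (p.1 + 1) (p.2 + 1) b := by
    rw [ser3_conj, ser3_congr (W' := fun _ _ _ v1 v2 v3 => ∑ p ∈ antidiagonal (a - 1),
      divPow p.1 v1 * divPow p.2 v2 * divPow (b - 1) v3) fun _ _ _ _ _ _ _ _ _ _ _ _ => by
        rw [show ∀ x y z : ℕ, x + y + z - z = x + y by omega]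
        push_cast
        rw [divPow_add, sum_mul], ser3_sum]
    exact sum_congr rfl fun p _ => by simp [g3_eq_ser3]
  have hLst : ser3 (fun u1 u2 _ _ _ _ => divPow (a - 1) (u2 - u1 : ℕ) * divPow (b - 1) u1) =
      g3 1 a b := by
    rw [ser3_conj, g3_eq_ser3]
    exact ser3_congr fun _ _ _ _ _ _ _ _ _ _ _ _ => by simp
  linear_combination (norm := module) stuffle + hFst + hMid + hLst + ser2_merge_fst_conj_g2 a b +
    ser2_merge_snd_conj_g2 a b

lemma gb2_zero_one_mem_gshSpan {a b N : ℕ} (ha : 2 ≤ a) (hb : 2 ≤ b) (hN : a + b + 1 ≤ N) :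
    gb2 0 1 a b ∈ gshSpan N := by
  have hU := g_mul_g2_sub_mem_gshSpan (a := a) (b := b) (c := 1) (N := N) (by omega) (by omega)
    le_rfl (by omega)
  have hA := sum_antidiagonal_sub_ends_mem (S := gshSpan N) (n := a - 1) (by omega)
    (F := fun p => g3 (p.1 + 1) (p.2 + 1) b) fun i j hij hi hj =>
      g3_mem_gshSpan (by omega) (by omega) (by omega) (by omega)
  have hB := sum_antidiagonal_sub_ends_mem (S := gshSpan N) (n := b - 1) (by omega)
    (F := fun p => g3 a (p.1 + 1) (p.2 + 1)) fun i j hij hi hj =>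
      g3_mem_gshSpan ha (by omega) (by omega) (by omega)
  simp only [zero_add, Nat.sub_add_cancel (by omega : 1 ≤ a), Nat.sub_add_cancel (by omega : 1 ≤ b)]
    at hA hB
  have h1ab := gsh3_mem_gshSpan (N := N) le_rfl (by omega : 1 ≤ a) (by omega : 1 ≤ b) (by omega)
  have ha1b := gsh3_mem_gshSpan (N := N) (by omega : 1 ≤ a) le_rfl (by omega : 1 ≤ b) (by omega)
  have hg2 := g2_mem_gshSpan (N := N) (by omega : 1 ≤ a) (by omega : 1 ≤ b) (by omega)
  have key : gb2 0 1 a b = (2 : ℚ) • ((g 1 * g2 a b - g3 1 a b - g3 a 1 b - g3 a b 1) -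
      gsh3 1 a b - gsh3 a 1 b -
      (∑ p ∈ antidiagonal (a - 1), g3 (p.1 + 1) (p.2 + 1) b - g3 1 a b - g3 a 1 b) -
      (∑ p ∈ antidiagonal (b - 1), g3 a (p.1 + 1) (p.2 + 1) - g3 a 1 b - g3 a b 1) + g2 a b) := by
    linear_combination (norm := module) (-2 : ℚ) • g_one_mul_g2_eq a b
      + (2 : ℚ) • gsh3_one_left b (by omega : a ≠ 1) + (2 : ℚ) • gsh3_one_mid b (by omega : a ≠ 1)
  rw [key]
  exact Submodule.smul_mem _ _
    (add_mem (sub_mem (sub_mem (sub_mem (sub_mem hU h1ab) ha1b) hA) hB) hg2)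

lemma g2_one_mul_g_add_half_mem_gshSpan {k1 k2 N : ℕ} (h1 : 2 ≤ k1) (h2 : 2 ≤ k2)
    (hN : k1 + k2 + 1 ≤ N) : g2 1 k1 * g k2 + (1 / 2 : ℚ) • gb2 1 0 k1 k2 ∈ gshSpan N := by
  have hU := g_mul_g2_sub_mem_gshSpan (a := 1) (b := k1) (c := k2) (N := N) le_rfl (by omega)
    (by omega) (by omega)
  have key : g2 1 k1 * g k2 + (1 / 2 : ℚ) • gb2 1 0 k1 k2 =
      (g k2 * g2 1 k1 - g3 k2 1 k1 - g3 1 k2 k1 - g3 1 k1 k2) + gsh3 k2 1 k1 + gsh3 1 k2 k1 +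
        gsh3 1 k1 k2 - (1 / 2 : ℚ) • gb2 0 1 k2 k1 + g2 k2 k1 + (1 / 2 : ℚ) • g2 k1 k2 := by
    linear_combination (norm := module) mul_comm (g2 1 k1) (g k2) -
      gsh3_one_mid k1 (by omega : k2 ≠ 1) - gsh3_one_left k1 (by omega : k2 ≠ 1) -
      gsh3_one_left k2 (by omega : k1 ≠ 1)
  rw [key]
  refine add_mem (add_mem (sub_mem (add_mem (add_mem (add_mem hU ?_) ?_) ?_) ?_) ?_) ?_
  · exact gsh3_mem_gshSpan (by omega) le_rfl (by omega) (by omega)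
  · exact gsh3_mem_gshSpan le_rfl (by omega) (by omega) (by omega)
  · exact gsh3_mem_gshSpan le_rfl (by omega) (by omega) (by omega)
  · exact Submodule.smul_mem _ _ (gb2_zero_one_mem_gshSpan h2 h1 (by omega))
  · exact g2_mem_gshSpan (by omega) (by omega) (by omega)
  · exact Submodule.smul_mem _ _ (g2_mem_gshSpan (by omega) (by omega) (by omega))

lemma gb_one_mul_g_sub_gb2_mem_gshSpan {k1 k2 N : ℕ} (h1 : 2 ≤ k1) (h2 : 2 ≤ k2)
    (hN : k1 + k2 + 1 ≤ N) : gb 1 k1 * g k2 - gb2 1 0 k1 k2 ∈ gshSpan N := by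
  have hf := (isPolyOnPos_divPow (k1 - 1)).sum_Ico_mul_divPow (k2 - 1)
  have key : gb 1 k1 * g k2 - gb2 1 0 k1 k2 =
      gb2 0 1 k2 k1 + ser1 fun u w =>
        u * ∑ v ∈ Ico 1 w, divPow (k1 - 1) v * divPow (k2 - 1) (w - v : ℕ) := by
    have hX : gb2 1 0 k1 k2 =
        ser2 fun u1 _ v1 v2 => divPow 1 u1 * divPow (k1 - 1) v1 * divPow (k2 - 1) v2 :=
      (gb2_eq_ser2 1 0 k1 k2).trans (ser2_congr fun _ _ _ _ _ _ _ _ => by simp)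
    rw [hX, gb_eq_ser1, g_eq_ser1, ser1_mul_ser1, add_sub_right_comm, add_sub_cancel_left,
      gb2_eq_ser2]
    refine congrArg₂ (· + ·) (ser2_congr fun _ _ _ _ _ _ _ _ => ?_) (ser1_congr fun _ _ _ _ => ?_)
    · simp
      ring
    · simp [mul_sum, mul_assoc]
  rw [key]
  exact add_mem (gb2_zero_one_mem_gshSpan h2 h1 (by omega)) (ser1_id_mul_mem_gshSpan hf (by omega))

lemma gb_one_mul_g_sub_half_gb2_mem_gshSpan {k1 k2 N : ℕ} (h1 : 2 ≤ k1) (h2 : 2 ≤ k2)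
    (hN : k1 + k2 + 1 ≤ N) : gb 1 k1 * g k2 - (1 / 2 : ℚ) • gb2 1 0 k1 k2 ∈ gshSpan N := by
  obtain ⟨f, hf, hE⟩ := gb_one_add_sum_eq (k := k1) (by omega)
  have hEg := congrArg (· * g k2) hE
  simp only [add_mul, sum_mul] at hEg
  have hMid := sum_antidiagonal_sub_ends_mem (S := gshSpan N) (n := k1 - 1) (by omega)
    (F := fun p => g2 (p.1 + 1) (p.2 + 1) * g k2) fun i j hij hi hj =>
      g2_mul_g_mem_gshSpan (by omega) (by omega) h2 (by omega)
  rw [zero_add, Nat.sub_add_cancel (by omega : 1 ≤ k1)] at hMid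
  have key : gb 1 k1 * g k2 - (1 / 2 : ℚ) • gb2 1 0 k1 k2 =
      ser1 (fun _ w => f w) * g k2 + g k1 * g k2 -
        (g2 1 k1 * g k2 + (1 / 2 : ℚ) • gb2 1 0 k1 k2) -
        (∑ p ∈ antidiagonal (k1 - 1), g2 (p.1 + 1) (p.2 + 1) * g k2 - g2 1 k1 * g k2 -
          g2 k1 1 * g k2) := by
    linear_combination (norm := module) hEg
  rw [key]
  exact sub_mem (sub_mem (add_mem (ser1_mul_g_mem_gshSpan hf (by omega) (by omega))
    (g_mul_g_mem_gshSpan (by omega) (by omega) (by omega)))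
    (g2_one_mul_g_add_half_mem_gshSpan h1 h2 hN)) hMid

end GshSpan

/-- `g^{(1,0)}_{k₁,k₂}` lies in the ℚ-span of the `g^sh` of weight ≤ k₁+k₂+1. -/
theorem stmt_15 (k1 k2 : ℕ) (h1 : 2 ≤ k1) (h2 : 2 ≤ k2) :
    gb2 1 0 k1 k2 ∈ Submodule.span ℚ (gshSpanSet (k1 + k2 + 1)) := by
  have hX := GshSpan.gb_one_mul_g_sub_gb2_mem_gshSpan h1 h2 le_rfl
  have hHalfX := GshSpan.gb_one_mul_g_sub_half_gb2_mem_gshSpan h1 h2 le_rfl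
  have key : gb2 1 0 k1 k2 = (2 : ℚ) • ((gb 1 k1 * g k2 - (1 / 2 : ℚ) • gb2 1 0 k1 k2) -
      (gb 1 k1 * g k2 - gb2 1 0 k1 k2)) := by
    module
  rw [key]
  exact Submodule.smul_mem _ _ (sub_mem hHalfX hX)
end

section
/- For every k ≥ 1, d̂ g_k − 2k·(g^sh_{1,k+1} + g^sh_{k+1,1} + g_{k+2} − g_1·g_{k+1}) lies in the ℚ-span of the series g^sh of weight at most k+1; concretely, k·g^{(1)}_{k+1} − 2k·( g_{1,k+1} + (1/2)(g^{(1)}_{k+1} − g_{k+1}) + g_{k+1,1} + g_{k+2} − g_1·g_{k+1} ) is a ℚ-linear combination of g_m with m ≤ k+1. -/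
open Finset PowerSeries

/-! The product `g_{k₁} g_{k₂}` is a sum over pairs `(u₁, v₁), (u₂, v₂)`; splitting it according
to `u₁ < u₂`, `u₂ < u₁` or `u₁ = u₂` gives the harmonic product formula
`g_{k₁} g_{k₂} = g_{k₁,k₂} + g_{k₂,k₁} + D_{k₁,k₂}`, where the diagonal part `D` only involves
`q^{u(v₁+v₂)}`. For `k₁ = 1` the inner sum of `D` over `v₁ + v₂ = w` is `Σ_{0<v<w} v^k/k!`, which
by Faulhaber's formula equals `Σ_i (B_i/i!) w^{k+1-i}/(k+1-i)!`; hence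
`D_{1,k+1} = g_{k+2} + Σ_{i ≥ 1} (B_i/i!) g_{k+2-i}`. The terms `g^{(1)}_{k+1}` cancel, and the
expression of the theorem is `k g_{k+1} + 2k (D_{1,k+1} − g_{k+2})`. -/

open Nat

lemma sum_divisors_eq_sum_range_ite {M : Type*} [AddCommMonoid M] {a N : ℕ} (ha : a ≤ N)
    (f : ℕ → ℕ → M) :
    ∑ u ∈ a.divisors, f u (a / u) =
      ∑ u ∈ range (N + 1), ∑ v ∈ range (N + 1), if 0 < u ∧ 0 < v ∧ u * v = a then f u v else 0 := by
  rw [← Nat.sum_divisorsAntidiagonal f, ← sum_product', ← sum_filter]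
  congr 1
  ext ⟨u, v⟩
  simp only [mem_divisorsAntidiagonal, mem_filter, mem_product, mem_range]
  constructor
  · rintro ⟨rfl, ha0⟩
    have hu : 0 < u := pos_of_ne_zero (left_ne_zero_of_mul ha0)
    have hv : 0 < v := pos_of_ne_zero (right_ne_zero_of_mul ha0)
    exact ⟨⟨by nlinarith, by nlinarith⟩, hu, hv, rfl⟩
  · rintro ⟨-, hu, hv, rfl⟩
    exact ⟨rfl, by positivity⟩

lemma sum_antidiagonal_ite_mul_ite {R : Type*} [NonUnitalNonAssocSemiring R] (n a b : ℕ)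
    (A B C D : Prop) [Decidable A] [Decidable B] [Decidable C] [Decidable D] (x y : R) :
    ∑ p ∈ antidiagonal n,
        (if A ∧ B ∧ a = p.1 then x else 0) * (if C ∧ D ∧ b = p.2 then y else 0) =
      if A ∧ C ∧ B ∧ D ∧ a + b = n then x * y else 0 := by
  by_cases h : a + b = n
  · rw [sum_eq_single (a, b)]
    · simp only [h, and_true]
      split_ifs <;> simp_all
    · rintro ⟨c, d⟩ - hne
      by_cases h1 : a = c <;> by_cases h2 : b = d <;> simp_all
    · simp [h]
  · rw [if_neg (by tauto)]
    refine sum_eq_zero fun p hp => ?_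
    rw [HasAntidiagonal.mem_antidiagonal] at hp
    by_cases h1 : a = p.1 <;> by_cases h2 : b = p.2 <;> simp_all

lemma ite_pos_pos_trichotomy {M : Type*} [AddMonoid M] (u1 u2 : ℕ) (P : Prop) [Decidable P]
    (x : M) :
    (if 0 < u1 ∧ 0 < u2 ∧ P then x else 0) =
      (if 0 < u1 ∧ u1 < u2 ∧ P then x else 0) + (if 0 < u2 ∧ u2 < u1 ∧ P then x else 0) +
        (if 0 < u1 ∧ u1 = u2 ∧ P then x else 0) := by
  by_cases hP : P
  · simp only [hP, and_true]
    split_ifs <;> first | omega | simp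
  · simp [hP]

lemma sum_range_pow_div_factorial (k w : ℕ) :
    ∑ v ∈ range w, (v : ℚ) ^ k / k ! =
      ∑ i ∈ range (k + 1), bernoulli i / i ! * ((w : ℚ) ^ (k + 1 - i) / (k + 1 - i)!) := by
  rw [← sum_div, sum_range_pow, sum_div]
  refine sum_congr rfl fun i hi => ?_
  have hi : i ≤ k + 1 := by rw [mem_range] at hi; omega
  have hfact : ((k + 1).choose i : ℚ) * i ! * (k + 1 - i)! = (k + 1)! := by
    exact_mod_cast choose_mul_factorial_mul_factorial hi
  rw [factorial_succ] at hfact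
  push_cast at hfact
  field_simp
  linear_combination (bernoulli i * (w : ℚ) ^ (k + 1 - i)) * hfact

lemma exists_eq_sum_smul_of_mem_span_image {R M ι : Type*} [Semiring R] [AddCommMonoid M]
    [Module R M] {s : Finset ι} {v : ι → M} {x : M} (hx : x ∈ Submodule.span R (v '' ↑s)) :
    ∃ c : ι → R, x = ∑ i ∈ s, c i • v i := by
  obtain ⟨l, hl, rfl⟩ := (Finsupp.mem_span_image_iff_linearCombination R).mp hx
  exact ⟨l, Finsupp.sum_of_support_subset l hl _ fun _ _ => zero_smul R _⟩

noncomputable def gWeight (k v : ℕ) : ℚ := (v : ℚ) ^ (k - 1) / (k - 1)!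

/-- `D_{k₁,k₂} = Σ_{u, v₁, v₂ ≥ 1} gWeight k₁ v₁ · gWeight k₂ v₂ · q^{u(v₁+v₂)}`, written with
`w = n / u = v₁ + v₂` and `v = v₂`. -/
noncomputable def gDiag (k1 k2 : ℕ) : PowerSeries ℚ :=
  PowerSeries.mk fun n => ∑ u ∈ n.divisors, ∑ v ∈ Ioo 0 (n / u),
    gWeight k1 (n / u - v) * gWeight k2 v

lemma coeff_g (k n : ℕ) : coeff n (g k) = ∑ u ∈ n.divisors, gWeight k (n / u) := by
  simp [g, gb, gWeight]

lemma coeff_g_eq_sum_range (k : ℕ) {n N : ℕ} (h : n ≤ N) :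
    coeff n (g k) = ∑ u ∈ range (N + 1), ∑ v ∈ range (N + 1),
      if 0 < u ∧ 0 < v ∧ u * v = n then gWeight k v else 0 := by
  rw [coeff_g]
  exact sum_divisors_eq_sum_range_ite h fun _ v => gWeight k v

lemma coeff_g_mul_g (k1 k2 n : ℕ) :
    coeff n (g k1 * g k2) =
      ∑ u1 ∈ range (n + 1), ∑ u2 ∈ range (n + 1), ∑ v1 ∈ range (n + 1), ∑ v2 ∈ range (n + 1),
        if 0 < u1 ∧ 0 < u2 ∧ 0 < v1 ∧ 0 < v2 ∧ u1 * v1 + u2 * v2 = n then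
          gWeight k1 v1 * gWeight k2 v2 else 0 := by
  have hexpand : ∀ p ∈ antidiagonal n, coeff p.1 (g k1) * coeff p.2 (g k2) =
      ∑ u1 ∈ range (n + 1), ∑ u2 ∈ range (n + 1), ∑ v1 ∈ range (n + 1), ∑ v2 ∈ range (n + 1),
        (if 0 < u1 ∧ 0 < v1 ∧ u1 * v1 = p.1 then gWeight k1 v1 else 0) *
          (if 0 < u2 ∧ 0 < v2 ∧ u2 * v2 = p.2 then gWeight k2 v2 else 0) := by
    intro p hp
    rw [HasAntidiagonal.mem_antidiagonal] at hp
    rw [coeff_g_eq_sum_range k1 (N := n) (by omega), coeff_g_eq_sum_range k2 (N := n) (by omega)]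
    simp only [sum_mul_sum]
  rw [coeff_mul, sum_congr rfl hexpand, sum_comm]
  refine sum_congr rfl fun u1 _ => ?_
  rw [sum_comm]
  refine sum_congr rfl fun u2 _ => ?_
  rw [sum_comm]
  refine sum_congr rfl fun v1 _ => ?_
  rw [sum_comm]
  exact sum_congr rfl fun v2 _ => sum_antidiagonal_ite_mul_ite _ _ _ _ _ _ _ _ _

lemma coeff_g2 (k1 k2 n : ℕ) :
    coeff n (g2 k1 k2) =
      ∑ u1 ∈ range (n + 1), ∑ u2 ∈ range (n + 1), ∑ v1 ∈ range (n + 1), ∑ v2 ∈ range (n + 1),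
        if 0 < u1 ∧ u1 < u2 ∧ 0 < v1 ∧ 0 < v2 ∧ u1 * v1 + u2 * v2 = n then
          gWeight k1 v1 * gWeight k2 v2 else 0 := by
  simp [g2, gb2, gWeight]

lemma coeff_g2_swap (k1 k2 n : ℕ) :
    coeff n (g2 k2 k1) =
      ∑ u1 ∈ range (n + 1), ∑ u2 ∈ range (n + 1), ∑ v1 ∈ range (n + 1), ∑ v2 ∈ range (n + 1),
        if 0 < u2 ∧ u2 < u1 ∧ 0 < v1 ∧ 0 < v2 ∧ u1 * v1 + u2 * v2 = n then
          gWeight k1 v1 * gWeight k2 v2 else 0 := by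
  rw [coeff_g2, sum_comm]
  refine sum_congr rfl fun u1 _ => sum_congr rfl fun u2 _ => ?_
  rw [sum_comm]
  refine sum_congr rfl fun v1 _ => sum_congr rfl fun v2 _ => if_congr ?_ (mul_comm _ _) rfl
  omega

lemma coeff_gDiag (k1 k2 n : ℕ) :
    coeff n (gDiag k1 k2) =
      ∑ u1 ∈ range (n + 1), ∑ u2 ∈ range (n + 1), ∑ v1 ∈ range (n + 1), ∑ v2 ∈ range (n + 1),
        if 0 < u1 ∧ u1 = u2 ∧ 0 < v1 ∧ 0 < v2 ∧ u1 * v1 + u2 * v2 = n then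
          gWeight k1 v1 * gWeight k2 v2 else 0 := by
  simp only [← sum_product']
  rw [← sum_filter, gDiag, coeff_mk, sum_sigma']
  have hquot {u v1 v2 : ℕ} (hu : 0 < u) (h : u * v1 + u * v2 = n) : n / u = v1 + v2 := by
    rw [← h, ← mul_add, Nat.mul_div_cancel_left _ hu]
  refine sum_nbij' (fun x => (x.1, x.1, n / x.1 - x.2, x.2)) (fun a => ⟨a.1, a.2.2.2⟩)
    ?_ ?_ (fun _ _ => rfl) ?_ (fun _ _ => rfl)
  · rintro ⟨u, v⟩ h
    simp only [mem_sigma, mem_divisors, mem_Ioo] at h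
    obtain ⟨⟨hdvd, hn⟩, hv, hvw⟩ := h
    have hu : 0 < u := pos_of_dvd_of_pos hdvd (pos_of_ne_zero hn)
    have hmul : u * (n / u) = n := Nat.mul_div_cancel' hdvd
    have hun : u ≤ n := le_of_dvd (pos_of_ne_zero hn) hdvd
    have hwn : n / u ≤ n := div_le_self n u
    simp only [mem_filter, mem_product, mem_range]
    refine ⟨⟨by omega, by omega, by omega, by omega⟩, hu, trivial, by omega, hv, ?_⟩
    rw [← mul_add, Nat.sub_add_cancel hvw.le, hmul]
  · rintro ⟨u, u', v1, v2⟩ h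
    simp only [mem_filter, mem_product, mem_range] at h
    obtain ⟨-, hu, rfl, hv1, hv2, h⟩ := h
    simp only [mem_sigma, mem_divisors, mem_Ioo, hquot hu h]
    exact ⟨⟨Dvd.intro _ (by rw [mul_add, h]), by rw [← h]; positivity⟩, hv2, by omega⟩
  · rintro ⟨u, u', v1, v2⟩ h
    simp only [mem_filter, mem_product, mem_range] at h
    obtain ⟨-, hu, rfl, hv1, hv2, h⟩ := h
    simp only [hquot hu h, Nat.add_sub_cancel]

theorem g_mul_g_eq_g2_add_g2_add_gDiag (k1 k2 : ℕ) :
    g k1 * g k2 = g2 k1 k2 + g2 k2 k1 + gDiag k1 k2 := by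
  ext n
  rw [map_add, map_add, coeff_g_mul_g, coeff_g2_swap k1 k2, coeff_g2, coeff_gDiag]
  simp only [← sum_add_distrib]
  exact sum_congr rfl fun u1 _ => sum_congr rfl fun u2 _ => sum_congr rfl fun v1 _ =>
    sum_congr rfl fun v2 _ => ite_pos_pos_trichotomy u1 u2 _ _

lemma sum_Ioo_gWeight {k : ℕ} (hk : 1 ≤ k) (w : ℕ) :
    ∑ v ∈ Ioo 0 w, gWeight (k + 1) v =
      ∑ i ∈ range (k + 1), bernoulli i / i ! * gWeight (k + 2 - i) w := by
  have hsub : Ioo 0 w ⊆ range w := fun v hv => by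
    simp only [mem_Ioo, mem_range] at hv ⊢; omega
  have hzero : ∀ v ∈ range w, v ∉ Ioo 0 w → gWeight (k + 1) v = 0 := fun v hv hv' => by
    obtain rfl : v = 0 := by simp only [mem_range, mem_Ioo, not_and, not_lt] at hv hv'; omega
    rw [gWeight, add_tsub_cancel_right, cast_zero, zero_pow (by omega), zero_div]
  rw [sum_subset hsub hzero]
  simp only [gWeight, add_tsub_cancel_right, sum_range_pow_div_factorial]
  refine sum_congr rfl fun i _ => ?_
  rw [show k + 2 - i - 1 = k + 1 - i by omega]

lemma gDiag_one_eq_sum_bernoulli_smul_g {k : ℕ} (hk : 1 ≤ k) :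
    gDiag 1 (k + 1) = ∑ i ∈ range (k + 1), (bernoulli i / i !) • g (k + 2 - i) := by
  ext n
  simp only [gDiag, coeff_mk, gWeight, tsub_self, pow_zero, factorial_zero, cast_one, div_one,
    one_mul, map_sum, coeff_smul, coeff_g, smul_eq_mul, mul_sum]
  rw [sum_comm]
  exact sum_congr rfl fun u _ => sum_Ioo_gWeight hk (n / u)

lemma gDiag_one_sub_g_mem_span {k : ℕ} (hk : 1 ≤ k) :
    gDiag 1 (k + 1) - g (k + 2) ∈ Submodule.span ℚ (g '' ↑(Icc 1 (k + 1))) := by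
  rw [gDiag_one_eq_sum_bernoulli_smul_g hk, sum_range_succ']
  simp only [bernoulli_zero, factorial_zero, cast_one, div_one, one_smul, tsub_zero,
    add_sub_cancel_right]
  refine Submodule.sum_mem _ fun i hi => Submodule.smul_mem _ _ (Submodule.subset_span ?_)
  exact ⟨k + 2 - (i + 1), by simp only [mem_range, coe_Icc, Set.mem_Icc] at hi ⊢; omega, rfl⟩

/-- `d̂ g_k − 2k (g^sh_{1,k+1} + g^sh_{k+1,1} + g_{k+2} − g₁ g_{k+1})` is a ℚ-linear
combination of the `g_m` with `m ≤ k+1`; here `d̂ g_k = k g^{(1)}_{k+1}` and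
`g^sh_{1,k+1} = g_{1,k+1} + (1/2)(g^{(1)}_{k+1} − g_{k+1})`, `g^sh_{k+1,1} = g_{k+1,1}`. -/
theorem stmt_16 (k : ℕ) (hk : 1 ≤ k) :
    ∃ c : ℕ → ℚ,
      (k : ℚ) • gb 1 (k + 1)
        - (2 * (k : ℚ)) • (g2 1 (k + 1) + (1/2 : ℚ) • (gb 1 (k + 1) - g (k + 1))
            + g2 (k + 1) 1 + g (k + 2) - g 1 * g (k + 1)) =
      ∑ m ∈ Finset.Icc 1 (k + 1), c m • g m := by
  apply exists_eq_sum_smul_of_mem_span_image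
  have hreduce : (k : ℚ) • gb 1 (k + 1)
        - (2 * (k : ℚ)) • (g2 1 (k + 1) + (1/2 : ℚ) • (gb 1 (k + 1) - g (k + 1))
            + g2 (k + 1) 1 + g (k + 2) - g 1 * g (k + 1)) =
      (k : ℚ) • g (k + 1) + (2 * (k : ℚ)) • (gDiag 1 (k + 1) - g (k + 2)) := by
    rw [g_mul_g_eq_g2_add_g2_add_gDiag]
    module
  rw [hreduce]
  refine add_mem (Submodule.smul_mem _ _ (Submodule.subset_span ⟨k + 1, ?_, rfl⟩))
    (Submodule.smul_mem _ _ (gDiag_one_sub_g_mem_span hk))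
  simp
end
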